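/- arXiv:quant-ph/0307139 — 3 statements merged into one kernel-verified Lean document; each statement's English description precedes it below -/
import Mathlib

section
/- Let H be a real or complex Hilbert space of finite dimension n ≥ 3 and let a, b be unit vectors in H with 0 < |⟨a, b⟩| < 1 (non-orthogonal and non-parallel). Then there is a finite set Γ(a,b) of unit vectors in H with a, b ∈ Γ(a,b) such that every state p on Γ(a,b) satisfying p(a) ∈ {0, 1} and p(b) ∈ {0, 1} must satisfy p(a) = p(b) = 0 (the logical indeterminacy principle). -/
set_option maxHeartbeats 1600000

namespace LogInd

abbrev F3 := Fin 3 → ℝ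

def d3 (x y : F3) : ℝ := x 0 * y 0 + x 1 * y 1 + x 2 * y 2

noncomputable def nz (v : F3) : F3 := fun i => v i / Real.sqrt (d3 v v)

lemma d3_nz_nz (v w : F3) : d3 (nz v) (nz w)
    = d3 v w / (Real.sqrt (d3 v v) * Real.sqrt (d3 w w)) := by
  simp [d3, nz]; ring

lemma nz_unit {v : F3} (h : 0 < d3 v v) : d3 (nz v) (nz v) = 1 := by
  rw [d3_nz_nz, Real.mul_self_sqrt h.le]
  exact div_self h.ne'

lemma nz_orth {v w : F3} (h : d3 v w = 0) : d3 (nz v) (nz w) = 0 := by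
  rw [d3_nz_nz, h, zero_div]

lemma d3_nz_right (v w : F3) : d3 v (nz w) = d3 v w / Real.sqrt (d3 w w) := by
  simp [d3, nz]; ring

lemma nz_self {v : F3} (h : d3 v v = 1) : nz v = v := by
  funext i; simp [nz, h]

def psi (r1 r2 r3 v : F3) : F3 := fun i => v 0 * r1 i + v 1 * r2 i + v 2 * r3 i

lemma psi_d3 {r1 r2 r3 : F3} (h11 : d3 r1 r1 = 1) (h22 : d3 r2 r2 = 1)
    (h33 : d3 r3 r3 = 1) (h12 : d3 r1 r2 = 0) (h13 : d3 r1 r3 = 0)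
    (h23 : d3 r2 r3 = 0) (x y : F3) :
    d3 (psi r1 r2 r3 x) (psi r1 r2 r3 y) = d3 x y := by
  simp only [d3, psi] at *
  linear_combination (x 0 * y 0) * h11 + (x 1 * y 1) * h22 + (x 2 * y 2) * h33
    + (x 0 * y 1 + x 1 * y 0) * h12 + (x 0 * y 2 + x 2 * y 0) * h13
    + (x 1 * y 2 + x 2 * y 1) * h23

def trule (L : List F3) (q : F3 → ℝ) : Prop :=
  ∀ x ∈ L, ∀ y ∈ L, ∀ z ∈ L,
    d3 x y = 0 → d3 x z = 0 → d3 y z = 0 → q x + q y + q z = 1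

def nneg (L : List F3) (q : F3 → ℝ) : Prop := ∀ x ∈ L, 0 ≤ q x

lemma trule_sublist {L L' : List F3} {q} (h : trule L q) (hs : ∀ x ∈ L', x ∈ L) :
    trule L' q := fun x hx y hy z hz => h x (hs x hx) y (hs y hy) z (hs z hz)

lemma nneg_sublist {L L' : List F3} {q} (h : nneg L q) (hs : ∀ x ∈ L', x ∈ L) :
    nneg L' q := fun x hx => h x (hs x hx)

/-- the canonical frame attached to a pole pair -/
noncomputable def fr1 (u w : F3) (c s : ℝ) : F3 := fun i => (w i - c * u i) / s
noncomputable def fr2 (u w : F3) (s : ℝ) : F3 :=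
  fun i => (![u 1 * w 2 - u 2 * w 1, u 2 * w 0 - u 0 * w 2, u 0 * w 1 - u 1 * w 0] : F3) i / s

section frame
variable {u w : F3} {c s : ℝ}

lemma frame_facts (hu : d3 u u = 1) (hw : d3 w w = 1) (hc : d3 u w = c)
    (hs : s ^ 2 = 1 - c ^ 2) (hsp : 0 < s) :
    (∀ x y, d3 (psi (fr1 u w c s) (fr2 u w s) u x) (psi (fr1 u w c s) (fr2 u w s) u y) = d3 x y)
    ∧ psi (fr1 u w c s) (fr2 u w s) u ![0,0,1] = u
    ∧ psi (fr1 u w c s) (fr2 u w s) u ![s,0,c] = w := by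
  have hsne : s ≠ 0 := hsp.ne'
  simp only [d3] at hu hw hc
  refine ⟨psi_d3 ?_ ?_ ?_ ?_ ?_ ?_, ?_, ?_⟩
  · simp only [d3, fr1]
    field_simp
    linear_combination hw - 2 * c * hc + c ^ 2 * hu - hs
  · have key : (u 0 * u 0 + u 1 * u 1 + u 2 * u 2) * (w 0 * w 0 + w 1 * w 1 + w 2 * w 2)
        - (u 0 * w 0 + u 1 * w 1 + u 2 * w 2) ^ 2 = s ^ 2 := by
      rw [hu, hw, hc]; linarith [hs]
    simp only [d3, fr2, Matrix.cons_val_zero, Matrix.cons_val_one, Matrix.head_cons,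
      Matrix.cons_val_two, Matrix.tail_cons]
    field_simp
    linear_combination key
  · simp only [d3]; linear_combination hu
  · simp only [d3, fr1, fr2, Matrix.cons_val_zero, Matrix.cons_val_one, Matrix.head_cons,
      Matrix.cons_val_two, Matrix.tail_cons]
    field_simp
    ring
  · simp only [d3, fr1]
    field_simp
    linear_combination hc - c * hu
  · simp only [d3, fr2, Matrix.cons_val_zero, Matrix.cons_val_one, Matrix.head_cons,
      Matrix.cons_val_two, Matrix.tail_cons]
    field_simp
    ring
  · funext i
    simp only [psi, Matrix.cons_val_zero, Matrix.cons_val_one, Matrix.head_cons,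
      Matrix.cons_val_two, Matrix.tail_cons]
    ring
  · funext i
    simp only [psi, fr1, fr2, Matrix.cons_val_zero, Matrix.cons_val_one, Matrix.head_cons,
      Matrix.cons_val_two, Matrix.tail_cons]
    field_simp
    ring

end frame

end LogInd

namespace LogInd

lemma d3v (a b c d e f : ℝ) : d3 ![a,b,c] ![d,e,f] = a*d + b*e + c*f := by
  simp [d3]

lemma d3_comm (x y : F3) : d3 x y = d3 y x := by simp [d3]; ring

lemma orth_nz_right {x V : F3} (h : d3 x V = 0) : d3 x (nz V) = 0 := by
  rw [d3_nz_right, h, zero_div]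

lemma pole_kills {L : List F3} {q : F3 → ℝ} (ht : trule L q) (hn : nneg L q)
    {x y z : F3} (hx : x ∈ L) (hy : y ∈ L) (hz : z ∈ L)
    (o1 : d3 x y = 0) (o2 : d3 x z = 0) (o3 : d3 y z = 0) (h1 : q x = 1) :
    q y = 0 ∧ q z = 0 := by
  have h := ht x hx y hy z hz o1 o2 o3
  have := hn y hy; have := hn z hz
  constructor <;> linarith

lemma zeros_give {L : List F3} {q : F3 → ℝ} (ht : trule L q)
    {x y z : F3} (hx : x ∈ L) (hy : y ∈ L) (hz : z ∈ L)
    (o1 : d3 x y = 0) (o2 : d3 x z = 0) (o3 : d3 y z = 0)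
    (hy0 : q y = 0) (hz0 : q z = 0) : q x = 1 := by
  have h := ht x hx y hy z hz o1 o2 o3
  linarith


lemma num_one_add_sq (c : ℝ) : (0:ℝ) < 1 + c^2 := by positivity

lemma num_hs2 {c : ℝ} (h0 : 0 < c) (h1 : c < 1) : 0 < 1 - c ^ 2 := by nlinarith

lemma num_hDpos (c : ℝ) : (0:ℝ) < (1+c^2)^2 + 1 - c^2 := by
  nlinarith [sq_nonneg c, sq_nonneg (c^2)]

lemma num_pos1 {c : ℝ} (h0 : 0 < c) : 0 < c*(1+c^2) := by nlinarith [sq_nonneg c]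

lemma num_lt1 {c : ℝ} (h0 : 0 < c) (h1 : c < 1) :
    (c*(1+c^2))^2 < (1+c^2)^2 + 1 - c^2 := by
  have hs2 : 0 < 1 - c^2 := num_hs2 h0 h1
  have hfact2 : ((1+c^2)^2+1-c^2) - (c*(1+c^2))^2 = (1-c^2)*((1+c^2)^2+1) := by ring
  have hp2 : (0:ℝ) < (1-c^2)*((1+c^2)^2+1) :=
    mul_pos hs2 (by nlinarith [sq_nonneg (1+c^2)])
  linarith

lemma num_bound {c : ℝ} (h : 1/4 < c) (h1 : c < 1) :
    (c*(1+c^2))^2 / ((1+c^2)^2 + 1 - c^2) ≤ 1 - (81/80)*(1-c^2) := by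
  have h0 : 0 < c := lt_trans (by norm_num) h
  have hs2 : 0 < 1 - c^2 := num_hs2 h0 h1
  have hc2 : 1/16 < c^2 := by nlinarith
  have h4 : c^2*(1-c^2) = c^2 - c^4 := by ring
  have h4' : (0:ℝ) ≤ c^2*(1-c^2) := mul_nonneg (sq_nonneg c) hs2.le
  have h79 : 0 < 79*c^2 - 2 - c^4 := by linarith
  rw [div_le_iff₀ (num_hDpos c)]
  have hfact : (1 - (81/80)*(1-c^2)) * ((1+c^2)^2+1-c^2) - (c*(1+c^2))^2
      = (1/80)*((1-c^2)*(79*c^2-2-c^4)) := by ring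
  have hpos := mul_pos hs2 h79
  linarith

lemma step_lemma (u w : F3) (hu : d3 u u = 1) (hw : d3 w w = 1)
    (hc0 : 1/4 < d3 u w) (hc1 : d3 u w < 1) :
    ∃ (m : F3) (L : List F3), (∀ x ∈ L, d3 x x = 1) ∧ u ∈ L ∧ w ∈ L ∧
    d3 m m = 1 ∧ 0 < d3 u m ∧ d3 u m < 1 ∧
    (81/80) * (1 - (d3 u w)^2) ≤ 1 - (d3 u m)^2 ∧
    ∀ q, nneg L q → trule L q → q u = 1 → q w = 1 → q m = 1 := by
  set c := d3 u w with hcdef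
  have hc0' : 0 < c := lt_trans (by norm_num) hc0
  have hs2 : 0 < 1 - c ^ 2 := num_hs2 hc0' hc1
  set s := Real.sqrt (1 - c ^ 2) with hsdef
  have hs : s ^ 2 = 1 - c ^ 2 := Real.sq_sqrt hs2.le
  have hsp : 0 < s := Real.sqrt_pos.mpr hs2
  obtain ⟨hΨ, hΨu, hΨw⟩ := frame_facts hu hw hcdef.symm hs hsp
  set Ψ := psi (fr1 u w c s) (fr2 u w s) u with hΨdef
  -- canonical vectors
  set E := (![1,1,0] : F3) with hE
  set E' := (![-1,1,0] : F3) with hE'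
  set F := (![c,-c,-s] : F3) with hF
  set F' := (![c^2,1,-s*c] : F3) with hF'
  set G := (![-s,s,-2*c] : F3) with hG
  set Z1 := (![c,0,-s] : F3) with hZ1
  set Y := (![0,1,0] : F3) with hY
  set Z2 := (![s^2,1+c^2,c*s] : F3) with hZ2
  set GZ2 := (![c*(3+c^2), -c*s^2, -2*s] : F3) with hGZ2
  set M := (![s*(1+c^2), -s, c*(1+c^2)] : F3) with hM
  -- positivity of norms
  have pE : 0 < d3 E E := by rw [hE, d3v]; norm_num
  have pE' : 0 < d3 E' E' := by rw [hE', d3v]; norm_num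
  have pF : 0 < d3 F F := by
    rw [hF, d3v]; linarith [mul_pos hsp hsp, mul_pos hc0' hc0']
  have pF' : 0 < d3 F' F' := by
    rw [hF', d3v]; linarith [sq_nonneg (c^2), sq_nonneg (s*c)]
  have pG : 0 < d3 G G := by
    rw [hG, d3v]; linarith [mul_pos hsp hsp, mul_pos hc0' hc0']
  have pZ1 : 0 < d3 Z1 Z1 := by
    rw [hZ1, d3v]; linarith [mul_pos hsp hsp, mul_pos hc0' hc0']
  have pY : 0 < d3 Y Y := by rw [hY, d3v]; norm_num
  have pZ2 : 0 < d3 Z2 Z2 := by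
    rw [hZ2, d3v]
    linarith [sq_nonneg (s^2), sq_nonneg (c*s), mul_pos (num_one_add_sq c) (num_one_add_sq c)]
  have pGZ2 : 0 < d3 GZ2 GZ2 := by
    rw [hGZ2, d3v]; linarith [sq_nonneg (c*(3+c^2)), sq_nonneg (c*s^2), mul_pos hsp hsp]
  have pM : 0 < d3 M M := by
    rw [hM, d3v]; linarith [sq_nonneg (s*(1+c^2)), sq_nonneg (c*(1+c^2)), mul_pos hsp hsp]
  -- raw orthogonality
  have oAE : d3 (![0,0,1] : F3) E = 0 := by rw [hE, d3v]; ring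
  have oAE' : d3 (![0,0,1] : F3) E' = 0 := by rw [hE', d3v]; ring
  have oEE' : d3 E E' = 0 := by rw [hE, hE', d3v]; ring
  have oWF : d3 (![s,0,c] : F3) F = 0 := by rw [hF, d3v]; ring
  have oWF' : d3 (![s,0,c] : F3) F' = 0 := by rw [hF', d3v]; ring
  have oFF' : d3 F F' = 0 := by rw [hF, hF', d3v]; linear_combination c * hs
  have oEF : d3 E F = 0 := by rw [hE, hF, d3v]; ring
  have oEG : d3 E G = 0 := by rw [hE, hG, d3v]; ring
  have oFG : d3 F G = 0 := by rw [hF, hG, d3v]; ring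
  have oWZ1 : d3 (![s,0,c] : F3) Z1 = 0 := by rw [hZ1, d3v]; ring
  have oWY : d3 (![s,0,c] : F3) Y = 0 := by rw [hY, d3v]; ring
  have oZ1Y : d3 Z1 Y = 0 := by rw [hZ1, hY, d3v]; ring
  have oGZ2' : d3 G Z2 = 0 := by rw [hG, hZ2, d3v]; linear_combination (-s) * hs
  have oGGZ2 : d3 G GZ2 = 0 := by rw [hG, hGZ2, d3v]; linear_combination (-(c*s)) * hs
  have oZ2GZ2 : d3 Z2 GZ2 = 0 := by rw [hZ2, hGZ2, d3v]; ring
  have oZ1Z2 : d3 Z1 Z2 = 0 := by rw [hZ1, hZ2, d3v]; ring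
  have oZ1M : d3 Z1 M = 0 := by rw [hZ1, hM, d3v]; ring
  have oZ2M : d3 Z2 M = 0 := by rw [hZ2, hM, d3v]; linear_combination (s*(1+c^2)) * hs
  -- lifted facts
  have lift0 : ∀ V : F3, d3 (![0,0,1] : F3) V = 0 → d3 u (Ψ (nz V)) = 0 := by
    intro V h
    conv_lhs => rw [← hΨu]
    rw [hΨ]; exact orth_nz_right h
  have liftW : ∀ V : F3, d3 (![s,0,c] : F3) V = 0 → d3 w (Ψ (nz V)) = 0 := by
    intro V h
    conv_lhs => rw [← hΨw]
    rw [hΨ]; exact orth_nz_right h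
  have liftVV : ∀ V V' : F3, d3 V V' = 0 → d3 (Ψ (nz V)) (Ψ (nz V')) = 0 := by
    intro V V' h; rw [hΨ]; exact nz_orth h
  -- quantities about m
  have hAM : d3 (![0,0,1] : F3) M = c*(1+c^2) := by rw [hM, d3v]; ring
  have hMM : d3 M M = (1+c^2)^2 + 1 - c^2 := by
    rw [hM, d3v]; linear_combination ((1+c^2)^2 + 1) * hs
  have hDpos : (0:ℝ) < (1+c^2)^2 + 1 - c^2 := num_hDpos c
  have hum : d3 u (Ψ (nz M)) = c*(1+c^2) / Real.sqrt ((1+c^2)^2 + 1 - c^2) := by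
    conv_lhs => rw [← hΨu]
    rw [hΨ, d3_nz_right, hAM, hMM]
  set LL : List F3 := [u, w, Ψ (nz E), Ψ (nz E'), Ψ (nz F), Ψ (nz F'), Ψ (nz G),
      Ψ (nz Z1), Ψ (nz Y), Ψ (nz Z2), Ψ (nz GZ2), Ψ (nz M)] with hLL
  have mu : u ∈ LL := by rw [hLL]; simp
  have mw : w ∈ LL := by rw [hLL]; simp
  have mE : Ψ (nz E) ∈ LL := by rw [hLL]; simp
  have mE' : Ψ (nz E') ∈ LL := by rw [hLL]; simp
  have mF : Ψ (nz F) ∈ LL := by rw [hLL]; simp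
  have mF' : Ψ (nz F') ∈ LL := by rw [hLL]; simp
  have mG : Ψ (nz G) ∈ LL := by rw [hLL]; simp
  have mZ1 : Ψ (nz Z1) ∈ LL := by rw [hLL]; simp
  have mY : Ψ (nz Y) ∈ LL := by rw [hLL]; simp
  have mZ2 : Ψ (nz Z2) ∈ LL := by rw [hLL]; simp
  have mGZ2 : Ψ (nz GZ2) ∈ LL := by rw [hLL]; simp
  have mM : Ψ (nz M) ∈ LL := by rw [hLL]; simp
  refine ⟨Ψ (nz M), LL, ?_, mu, mw, ?_, ?_, ?_, ?_, ?_⟩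
  · intro x hx
    rw [hLL] at hx
    simp only [List.mem_cons, List.not_mem_nil, or_false] at hx
    rcases hx with h|h|h|h|h|h|h|h|h|h|h|h <;> subst h <;>
      first
        | exact hu
        | exact hw
        | (rw [hΨ]; exact nz_unit (by assumption))
  · rw [hΨ]; exact nz_unit pM
  · rw [hum]
    exact div_pos (num_pos1 hc0') (Real.sqrt_pos.mpr hDpos)
  · rw [hum, div_lt_one (Real.sqrt_pos.mpr hDpos)]
    exact (Real.lt_sqrt (num_pos1 hc0').le).mpr (num_lt1 hc0' hc1)
  · rw [hum, div_pow, Real.sq_sqrt hDpos.le]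
    have h2 := num_bound hc0 hc1
    linarith
  · intro q hn ht hqu hqw
    obtain ⟨qE0, qE'0⟩ := pole_kills ht hn mu mE mE' (lift0 E oAE) (lift0 E' oAE')
      (liftVV E E' oEE') hqu
    obtain ⟨qF0, -⟩ := pole_kills ht hn mw mF mF' (liftW F oWF) (liftW F' oWF')
      (liftVV F F' oFF') hqw
    have qG1 := zeros_give ht mG mE mF (liftVV G E (by rw [d3_comm]; exact oEG))
      (liftVV G F (by rw [d3_comm]; exact oFG)) (liftVV E F oEF) qE0 qF0
    obtain ⟨qZ10, qY0⟩ := pole_kills ht hn mw mZ1 mY (liftW Z1 oWZ1) (liftW Y oWY)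
      (liftVV Z1 Y oZ1Y) hqw
    obtain ⟨qZ20, -⟩ := pole_kills ht hn mG mZ2 mGZ2 (liftVV G Z2 oGZ2')
      (liftVV G GZ2 oGGZ2) (liftVV Z2 GZ2 oZ2GZ2) qG1
    exact zeros_give ht mM mZ1 mZ2 (liftVV M Z1 (by rw [d3_comm]; exact oZ1M))
      (liftVV M Z2 (by rw [d3_comm]; exact oZ2M)) (liftVV Z1 Z2 oZ1Z2) qZ10 qZ20

end LogInd

namespace LogInd

lemma num_Rlt {c R : ℝ} (h0 : 0 < c) (h14 : c ≤ 1/4)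
    (hR : R^2 = (1-c^2)^2 - 8*c^2*(1+c^2)) (hR0 : 0 ≤ R) : R < 1 - c^2 := by
  have hc2 : c^2 ≤ 1/16 := by nlinarith
  have h1 : 0 < 1 - c^2 := by nlinarith
  nlinarith [sq_nonneg c, mul_pos (mul_pos h0 h0) (num_one_add_sq c)]

lemma num_quad {c R : ℝ} (hc : c ≠ 0) (hR : R^2 = (1-c^2)^2 - 8*c^2*(1+c^2)) :
    2*c*(((1-c^2) - R)/(4*c))^2 - (1-c^2)*(((1-c^2) - R)/(4*c)) + c*(1+c^2) = 0 := by
  field_simp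
  ring_nf
  linear_combination 2 * hR

lemma base_lemma (u w : F3) (hu : d3 u u = 1) (hw : d3 w w = 1)
    (hc0 : 0 < d3 u w) (hc14 : d3 u w ≤ 1/4) :
    ∃ L : List F3, (∀ x ∈ L, d3 x x = 1) ∧ u ∈ L ∧ w ∈ L ∧
    ∀ q, nneg L q → trule L q → q u = 1 → q w = 1 → False := by
  set c := d3 u w with hcdef
  have hc0' : 0 < c := hc0
  have hc1 : c < 1 := by linarith
  have hs2 : 0 < 1 - c ^ 2 := num_hs2 hc0' hc1
  set s := Real.sqrt (1 - c ^ 2) with hsdef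
  have hs : s ^ 2 = 1 - c ^ 2 := Real.sq_sqrt hs2.le
  have hsp : 0 < s := Real.sqrt_pos.mpr hs2
  obtain ⟨hΨ, hΨu, hΨw⟩ := frame_facts hu hw hcdef.symm hs hsp
  set Ψ := psi (fr1 u w c s) (fr2 u w s) u with hΨdef
  -- Δ and τ
  set R := Real.sqrt ((1-c^2)^2 - 8*c^2*(1+c^2)) with hRdef
  have hΔ0 : (0:ℝ) ≤ (1-c^2)^2 - 8*c^2*(1+c^2) := by
    have hc2 : c^2 ≤ 1/16 := by nlinarith
    have hc4 : c^4 ≤ 1/256 := by nlinarith [sq_nonneg c]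
    nlinarith
  have hR : R^2 = (1-c^2)^2 - 8*c^2*(1+c^2) := Real.sq_sqrt hΔ0
  have hR0 : 0 ≤ R := Real.sqrt_nonneg _
  set τ := ((1-c^2) - R)/(4*c) with hτdef
  have hτpos : 0 < τ := by
    rw [hτdef]
    exact div_pos (by linarith [num_Rlt hc0' hc14 hR hR0]) (by linarith)
  have hquad : 2*c*τ^2 - (1-c^2)*τ + c*(1+c^2) = 0 := by
    rw [hτdef]; exact num_quad hc0'.ne' hR
  -- canonical vectors
  set E := (![1,1,0] : F3) with hE
  set E' := (![-1,1,0] : F3) with hE'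
  set F := (![c,-c,-s] : F3) with hF
  set F' := (![c^2,1,-s*c] : F3) with hF'
  set G := (![-s,s,-2*c] : F3) with hG
  set X1 := (![c,τ,-s] : F3) with hX1
  set W1 := (![-c*τ,1,s*τ] : F3) with hW1
  set X2 := (![s*c,s*τ,c^2+τ^2] : F3) with hX2
  set W2 := (![c+τ,τ-c,-s] : F3) with hW2
  set X3 := (![τ,-c,0] : F3) with hX3
  set W3 := (![c,τ,0] : F3) with hW3
  -- positivity of norms
  have pE : 0 < d3 E E := by rw [hE, d3v]; norm_num
  have pE' : 0 < d3 E' E' := by rw [hE', d3v]; norm_num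
  have pF : 0 < d3 F F := by
    rw [hF, d3v]; linarith [mul_pos hsp hsp, mul_pos hc0' hc0']
  have pF' : 0 < d3 F' F' := by
    rw [hF', d3v]; linarith [sq_nonneg (c^2), sq_nonneg (s*c)]
  have pG : 0 < d3 G G := by
    rw [hG, d3v]; linarith [mul_pos hsp hsp, mul_pos hc0' hc0']
  have pX1 : 0 < d3 X1 X1 := by
    rw [hX1, d3v]; linarith [mul_pos hsp hsp, mul_pos hc0' hc0', sq_nonneg τ]
  have pW1 : 0 < d3 W1 W1 := by
    rw [hW1, d3v]; linarith [sq_nonneg (c*τ), sq_nonneg (s*τ)]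
  have hct : 0 < c^2 + τ^2 := by linarith [mul_pos hc0' hc0', sq_nonneg τ]
  have pX2 : 0 < d3 X2 X2 := by
    rw [hX2, d3v]; linarith [sq_nonneg (s*c), sq_nonneg (s*τ), mul_pos hct hct]
  have pW2 : 0 < d3 W2 W2 := by
    rw [hW2, d3v]; linarith [sq_nonneg (c+τ), sq_nonneg (τ-c), mul_pos hsp hsp]
  have pX3 : 0 < d3 X3 X3 := by
    rw [hX3, d3v]; linarith [mul_pos hc0' hc0', sq_nonneg τ]
  have pW3 : 0 < d3 W3 W3 := by
    rw [hW3, d3v]; linarith [mul_pos hc0' hc0', sq_nonneg τ]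
  -- raw orthogonality
  have oAE : d3 (![0,0,1] : F3) E = 0 := by rw [hE, d3v]; ring
  have oAE' : d3 (![0,0,1] : F3) E' = 0 := by rw [hE', d3v]; ring
  have oEE' : d3 E E' = 0 := by rw [hE, hE', d3v]; ring
  have oWF : d3 (![s,0,c] : F3) F = 0 := by rw [hF, d3v]; ring
  have oWF' : d3 (![s,0,c] : F3) F' = 0 := by rw [hF', d3v]; ring
  have oFF' : d3 F F' = 0 := by rw [hF, hF', d3v]; linear_combination c * hs
  have oEF : d3 E F = 0 := by rw [hE, hF, d3v]; ring
  have oEG : d3 E G = 0 := by rw [hE, hG, d3v]; ring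
  have oFG : d3 F G = 0 := by rw [hF, hG, d3v]; ring
  have oWX1 : d3 (![s,0,c] : F3) X1 = 0 := by rw [hX1, d3v]; ring
  have oWW1 : d3 (![s,0,c] : F3) W1 = 0 := by rw [hW1, d3v]; ring
  have oX1W1 : d3 X1 W1 = 0 := by rw [hX1, hW1, d3v]; linear_combination (-τ) * hs
  have oGX2 : d3 G X2 = 0 := by
    rw [hG, hX2, d3v]; linear_combination (τ - c) * hs - hquad
  have oGW2 : d3 G W2 = 0 := by rw [hG, hW2, d3v]; ring
  have oX2W2 : d3 X2 W2 = 0 := by rw [hX2, hW2, d3v]; ring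
  have oX1X2 : d3 X1 X2 = 0 := by rw [hX1, hX2, d3v]; ring
  have oX1X3 : d3 X1 X3 = 0 := by rw [hX1, hX3, d3v]; ring
  have oX2X3 : d3 X2 X3 = 0 := by rw [hX2, hX3, d3v]; ring
  have oAX3 : d3 (![0,0,1] : F3) X3 = 0 := by rw [hX3, d3v]; ring
  have oAW3 : d3 (![0,0,1] : F3) W3 = 0 := by rw [hW3, d3v]; ring
  have oX3W3 : d3 X3 W3 = 0 := by rw [hX3, hW3, d3v]; ring
  -- lifted facts
  have lift0 : ∀ V : F3, d3 (![0,0,1] : F3) V = 0 → d3 u (Ψ (nz V)) = 0 := by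
    intro V h
    conv_lhs => rw [← hΨu]
    rw [hΨ]; exact orth_nz_right h
  have liftW : ∀ V : F3, d3 (![s,0,c] : F3) V = 0 → d3 w (Ψ (nz V)) = 0 := by
    intro V h
    conv_lhs => rw [← hΨw]
    rw [hΨ]; exact orth_nz_right h
  have liftVV : ∀ V V' : F3, d3 V V' = 0 → d3 (Ψ (nz V)) (Ψ (nz V')) = 0 := by
    intro V V' h; rw [hΨ]; exact nz_orth h
  set LL : List F3 := [u, w, Ψ (nz E), Ψ (nz E'), Ψ (nz F), Ψ (nz F'), Ψ (nz G),
      Ψ (nz X1), Ψ (nz W1), Ψ (nz X2), Ψ (nz W2), Ψ (nz X3), Ψ (nz W3)] with hLL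
  have mu : u ∈ LL := by rw [hLL]; simp
  have mw : w ∈ LL := by rw [hLL]; simp
  have mE : Ψ (nz E) ∈ LL := by rw [hLL]; simp
  have mE' : Ψ (nz E') ∈ LL := by rw [hLL]; simp
  have mF : Ψ (nz F) ∈ LL := by rw [hLL]; simp
  have mF' : Ψ (nz F') ∈ LL := by rw [hLL]; simp
  have mG : Ψ (nz G) ∈ LL := by rw [hLL]; simp
  have mX1 : Ψ (nz X1) ∈ LL := by rw [hLL]; simp
  have mW1 : Ψ (nz W1) ∈ LL := by rw [hLL]; simp
  have mX2 : Ψ (nz X2) ∈ LL := by rw [hLL]; simp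
  have mW2 : Ψ (nz W2) ∈ LL := by rw [hLL]; simp
  have mX3 : Ψ (nz X3) ∈ LL := by rw [hLL]; simp
  have mW3 : Ψ (nz W3) ∈ LL := by rw [hLL]; simp
  refine ⟨LL, ?_, mu, mw, ?_⟩
  · intro x hx
    rw [hLL] at hx
    simp only [List.mem_cons, List.not_mem_nil, or_false] at hx
    rcases hx with h|h|h|h|h|h|h|h|h|h|h|h|h <;> subst h <;>
      first
        | exact hu
        | exact hw
        | (rw [hΨ]; exact nz_unit (by assumption))
  · intro q hn ht hqu hqw
    obtain ⟨qE0, qE'0⟩ := pole_kills ht hn mu mE mE' (lift0 E oAE) (lift0 E' oAE')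
      (liftVV E E' oEE') hqu
    obtain ⟨qF0, -⟩ := pole_kills ht hn mw mF mF' (liftW F oWF) (liftW F' oWF')
      (liftVV F F' oFF') hqw
    have qG1 := zeros_give ht mG mE mF (liftVV G E (by rw [d3_comm]; exact oEG))
      (liftVV G F (by rw [d3_comm]; exact oFG)) (liftVV E F oEF) qE0 qF0
    obtain ⟨qX10, -⟩ := pole_kills ht hn mw mX1 mW1 (liftW X1 oWX1) (liftW W1 oWW1)
      (liftVV X1 W1 oX1W1) hqw
    obtain ⟨qX20, -⟩ := pole_kills ht hn mG mX2 mW2 (liftVV G X2 oGX2)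
      (liftVV G W2 oGW2) (liftVV X2 W2 oX2W2) qG1
    have qX31 := zeros_give ht mX3 mX1 mX2 (liftVV X3 X1 (by rw [d3_comm]; exact oX1X3))
      (liftVV X3 X2 (by rw [d3_comm]; exact oX2X3)) (liftVV X1 X2 oX1X2) qX10 qX20
    have hfin := ht u mu (Ψ (nz X3)) mX3 (Ψ (nz W3)) mW3 (lift0 X3 oAX3) (lift0 W3 oAW3)
      (liftVV X3 W3 oX3W3)
    have := hn (Ψ (nz W3)) mW3
    linarith

end LogInd

namespace LogInd

lemma kernel : ∀ (k : ℕ) (u w : F3), d3 u u = 1 → d3 w w = 1 → 0 < d3 u w → d3 u w < 1 →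
    (15/16 : ℝ) * (80/81)^k ≤ 1 - (d3 u w)^2 →
    ∃ L : List F3, (∀ x ∈ L, d3 x x = 1) ∧ u ∈ L ∧ w ∈ L ∧
      ∀ q, nneg L q → trule L q → q u = 1 → q w = 1 → False := by
  intro k
  induction k with
  | zero =>
    intro u w hu hw hc0 hc1 hk
    apply base_lemma u w hu hw hc0
    have hk' : (15/16:ℝ) ≤ 1 - (d3 u w)^2 := by simpa using hk
    nlinarith [hc0]
  | succ k IH =>
    intro u w hu hw hc0 hc1 hk
    by_cases hsplit : d3 u w ≤ 1/4
    · exact base_lemma u w hu hw hc0 hsplit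
    · push_neg at hsplit
      obtain ⟨m, L1, hL1u, hmemu, hmemw, hmm, hum0, hum1, hbd, hder⟩ :=
        step_lemma u w hu hw hsplit hc1
      have hkm : (15/16 : ℝ) * (80/81)^k ≤ 1 - (d3 u m)^2 := by
        have h1 : (15/16:ℝ)*(80/81)^(k+1) ≤ 1 - (d3 u w)^2 := hk
        have he : (15/16:ℝ)*(80/81)^k = (81/80) * ((15/16)*(80/81)^(k+1)) := by
          rw [pow_succ]; ring
        rw [he]
        calc (81/80:ℝ) * ((15/16)*(80/81)^(k+1)) ≤ (81/80)*(1 - (d3 u w)^2) :=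
              mul_le_mul_of_nonneg_left h1 (by norm_num)
          _ ≤ 1 - (d3 u m)^2 := hbd
      obtain ⟨L2, hL2u, hmu2, hmm2, href⟩ := IH u m hu hmm hum0 hum1 hkm
      refine ⟨L1 ++ L2, ?_, List.mem_append_left _ hmemu, List.mem_append_left _ hmemw, ?_⟩
      · intro x hx
        rcases List.mem_append.mp hx with h|h
        · exact hL1u x h
        · exact hL2u x h
      · intro q hn ht hqu hqw
        have hn1 := nneg_sublist hn (fun x hx => List.mem_append_left _ hx)
        have ht1 := trule_sublist ht (fun x hx => List.mem_append_left _ hx)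
        have hn2 := nneg_sublist hn (fun x hx => List.mem_append_right _ hx)
        have ht2 := trule_sublist ht (fun x hx => List.mem_append_right _ hx)
        exact href q hn2 ht2 hqu (hder q hn1 ht1 hqu hqw)

lemma pair_refute (u w : F3) (hu : d3 u u = 1) (hw : d3 w w = 1)
    (hc0 : 0 < d3 u w) (hc1 : d3 u w < 1) :
    ∃ L : List F3, (∀ x ∈ L, d3 x x = 1) ∧ u ∈ L ∧ w ∈ L ∧
      ∀ q, nneg L q → trule L q → q u = 1 → q w = 1 → False := by
  have ht : (0:ℝ) < 1 - (d3 u w)^2 := by nlinarith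
  obtain ⟨k, hk⟩ := exists_pow_lt_of_lt_one ht (by norm_num : (80/81:ℝ) < 1)
  refine kernel k u w hu hw hc0 hc1 ?_
  have h0 : (0:ℝ) ≤ (80/81)^k := pow_nonneg (by norm_num) k
  nlinarith

lemma R3main (s c : ℝ) (hs0 : 0 < s) (hc0 : 0 < c) (hc1 : c < 1) (h1 : s^2 + c^2 = 1) :
    ∃ L : List F3, (∀ x ∈ L, d3 x x = 1) ∧ (![0,0,1] : F3) ∈ L ∧ (![s,0,c] : F3) ∈ L ∧
    (![1,0,0] : F3) ∈ L ∧ (![0,1,0] : F3) ∈ L ∧ (![c,0,-s] : F3) ∈ L ∧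
    ∀ q : F3 → ℝ, nneg L q → trule L q →
      (q ![0,0,1] = 0 ∨ q ![0,0,1] = 1) → (q ![s,0,c] = 0 ∨ q ![s,0,c] = 1) →
      q ![0,0,1] = 0 ∧ q ![s,0,c] = 0 := by
  have hs1 : s < 1 := by nlinarith
  have uA : d3 (![0,0,1] : F3) ![0,0,1] = 1 := by rw [d3v]; norm_num
  have uB : d3 (![s,0,c] : F3) ![s,0,c] = 1 := by rw [d3v]; linarith [h1, sq_nonneg s, sq_nonneg c, sq_abs s]; 
  have uxh : d3 (![1,0,0] : F3) ![1,0,0] = 1 := by rw [d3v]; norm_num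
  have uY : d3 (![0,1,0] : F3) ![0,1,0] = 1 := by rw [d3v]; norm_num
  have uN : d3 (![-c,0,s] : F3) ![-c,0,s] = 1 := by rw [d3v]; nlinarith [h1]
  have uZB : d3 (![c,0,-s] : F3) ![c,0,-s] = 1 := by rw [d3v]; nlinarith [h1]
  have dAB : d3 (![0,0,1] : F3) ![s,0,c] = c := by rw [d3v]; ring
  have dAN : d3 (![0,0,1] : F3) ![-c,0,s] = s := by rw [d3v]; ring
  have dBxh : d3 (![s,0,c] : F3) ![1,0,0] = s := by rw [d3v]; ring
  obtain ⟨L1, hL1u, mA1, mB1, ref1⟩ := pair_refute ![0,0,1] ![s,0,c] uA uB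
    (by rw [dAB]; exact hc0) (by rw [dAB]; exact hc1)
  obtain ⟨L2, hL2u, mA2, mN2, ref2⟩ := pair_refute ![0,0,1] ![-c,0,s] uA uN
    (by rw [dAN]; exact hs0) (by rw [dAN]; exact hs1)
  obtain ⟨L3, hL3u, mB3, mxh3, ref3⟩ := pair_refute ![s,0,c] ![1,0,0] uB uxh
    (by rw [dBxh]; exact hs0) (by rw [dBxh]; exact hs1)
  set L0 : List F3 := [![0,0,1], ![s,0,c], ![1,0,0], ![0,1,0], ![-c,0,s], ![c,0,-s]] with hL0
  refine ⟨L0 ++ L1 ++ L2 ++ L3, ?_, ?_, ?_, ?_, ?_, ?_, ?_⟩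
  · intro x hx
    rcases List.mem_append.mp hx with hx'|h3
    · rcases List.mem_append.mp hx' with hx''|h2
      · rcases List.mem_append.mp hx'' with h0|h1'
        · rw [hL0] at h0
          simp only [List.mem_cons, List.not_mem_nil, or_false] at h0
          rcases h0 with h|h|h|h|h|h <;> subst h <;> assumption
        · exact hL1u x h1'
      · exact hL2u x h2
    · exact hL3u x h3
  · apply List.mem_append_left; apply List.mem_append_left; apply List.mem_append_left
    rw [hL0]; simp
  · apply List.mem_append_left; apply List.mem_append_left; apply List.mem_append_left
    rw [hL0]; simp
  · apply List.mem_append_left; apply List.mem_append_left; apply List.mem_append_left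
    rw [hL0]; simp
  · apply List.mem_append_left; apply List.mem_append_left; apply List.mem_append_left
    rw [hL0]; simp
  · apply List.mem_append_left; apply List.mem_append_left; apply List.mem_append_left
    rw [hL0]; simp
  · intro q hn ht hA01 hB01
    have sub0 : ∀ x ∈ L0, x ∈ L0 ++ L1 ++ L2 ++ L3 := by
      intro x hx
      apply List.mem_append_left; apply List.mem_append_left; exact List.mem_append_left _ hx
    have sub1 : ∀ x ∈ L1, x ∈ L0 ++ L1 ++ L2 ++ L3 := by
      intro x hx
      apply List.mem_append_left; apply List.mem_append_left; exact List.mem_append_right _ hx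
    have sub2 : ∀ x ∈ L2, x ∈ L0 ++ L1 ++ L2 ++ L3 := by
      intro x hx
      apply List.mem_append_left; exact List.mem_append_right _ hx
    have sub3 : ∀ x ∈ L3, x ∈ L0 ++ L1 ++ L2 ++ L3 := fun x hx =>
      List.mem_append_right _ hx
    have mA : (![0,0,1] : F3) ∈ L0 ++ L1 ++ L2 ++ L3 := sub0 _ (by rw [hL0]; simp)
    have mB : (![s,0,c] : F3) ∈ L0 ++ L1 ++ L2 ++ L3 := sub0 _ (by rw [hL0]; simp)
    have mxh : (![1,0,0] : F3) ∈ L0 ++ L1 ++ L2 ++ L3 := sub0 _ (by rw [hL0]; simp)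
    have mY : (![0,1,0] : F3) ∈ L0 ++ L1 ++ L2 ++ L3 := sub0 _ (by rw [hL0]; simp)
    have mN : (![-c,0,s] : F3) ∈ L0 ++ L1 ++ L2 ++ L3 := sub0 _ (by rw [hL0]; simp)
    have mZB : (![c,0,-s] : F3) ∈ L0 ++ L1 ++ L2 ++ L3 := sub0 _ (by rw [hL0]; simp)
    have oAxh : d3 (![0,0,1] : F3) ![1,0,0] = 0 := by rw [d3v]; ring
    have oAY : d3 (![0,0,1] : F3) ![0,1,0] = 0 := by rw [d3v]; ring
    have oxhY : d3 (![1,0,0] : F3) ![0,1,0] = 0 := by rw [d3v]; ring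
    have oBY : d3 (![s,0,c] : F3) ![0,1,0] = 0 := by rw [d3v]; ring
    have oBZB : d3 (![s,0,c] : F3) ![c,0,-s] = 0 := by rw [d3v]; ring
    have oYZB : d3 (![0,1,0] : F3) ![c,0,-s] = 0 := by rw [d3v]; ring
    have oBN : d3 (![s,0,c] : F3) ![-c,0,s] = 0 := by rw [d3v]; ring
    have oYN : d3 (![0,1,0] : F3) ![-c,0,s] = 0 := by rw [d3v]; ring
    rcases hA01 with hA0 | hA1 <;> rcases hB01 with hB0 | hB1
    · exact ⟨hA0, hB0⟩
    · -- A = 0, B = 1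
      exfalso
      obtain ⟨qY0, qZB0⟩ := pole_kills ht hn mB mY mZB oBY oBZB oYZB hB1
      have qxh1 := zeros_give ht mxh mA mY (by rw [d3_comm]; exact oAxh) oxhY oAY hA0 qY0
      exact ref3 q (nneg_sublist hn sub3) (trule_sublist ht sub3) hB1 qxh1
    · -- A = 1, B = 0
      exfalso
      obtain ⟨qxh0, qY0⟩ := pole_kills ht hn mA mxh mY oAxh oAY oxhY hA1
      have qN1 := zeros_give ht mN mB mY (by rw [d3_comm]; exact oBN)
        (by rw [d3_comm]; exact oYN) oBY hB0 qY0
      exact ref2 q (nneg_sublist hn sub2) (trule_sublist ht sub2) hA1 qN1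
    · exact absurd (ref1 q (nneg_sublist hn sub1) (trule_sublist ht sub1) hA1 hB1) not_false

end LogInd


open LogInd

/-- A state on a finite set `Γ` of unit vectors in a finite-dimensional Hilbert space
`H` over `𝕜`: a function `p : H → ℝ`, nonnegative on `Γ`, invariant under unimodular
scalar multiples staying inside `Γ`, and summing to `1` on every orthonormal basis of
`H` consisting of vectors of `Γ`. -/
def IsStateOnFinset {𝕜 : Type*} [RCLike 𝕜] {H : Type*} [NormedAddCommGroup H]
    [InnerProductSpace 𝕜 H] [FiniteDimensional 𝕜 H] (Γ : Finset H) (p : H → ℝ) : Prop :=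
  (∀ x ∈ Γ, 0 ≤ p x) ∧
  (∀ (α : 𝕜), ∀ x ∈ Γ, ‖α‖ = 1 → α • x ∈ Γ → p (α • x) = p x) ∧
  ∀ b : OrthonormalBasis (Fin (Module.finrank 𝕜 H)) 𝕜 H,
    (∀ j, b j ∈ Γ) → ∑ j, p (b j) = 1

/-- **Logical indeterminacy principle.** For unit vectors `a, b` with `0 < |⟨a,b⟩| < 1`
in a Hilbert space of finite dimension `≥ 3` there is a finite set `Γ(a,b)` of unit
vectors containing `a` and `b` such that every state `p` on `Γ(a,b)` with
`p a, p b ∈ {0,1}` satisfies `p a = p b = 0`. -/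
theorem logical_indeterminacy {𝕜 : Type*} [RCLike 𝕜] {H : Type*} [NormedAddCommGroup H]
    [InnerProductSpace 𝕜 H] [FiniteDimensional 𝕜 H] (hn : 3 ≤ Module.finrank 𝕜 H)
    (a b : H) (ha : ‖a‖ = 1) (hb : ‖b‖ = 1)
    (hab₀ : 0 < ‖(inner 𝕜 a b : 𝕜)‖) (hab₁ : ‖(inner 𝕜 a b : 𝕜)‖ < 1) :
    ∃ Γ : Finset H, (∀ x ∈ Γ, ‖x‖ = 1) ∧ a ∈ Γ ∧ b ∈ Γ ∧
      ∀ p : H → ℝ, IsStateOnFinset (𝕜 := 𝕜) Γ p →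
        (p a = 0 ∨ p a = 1) → (p b = 0 ∨ p b = 1) → p a = 0 ∧ p b = 0 := by
  classical
  set n := Module.finrank 𝕜 H with hnn
  set ζ : 𝕜 := inner 𝕜 a b with hζ
  have hζ0 : ζ ≠ 0 := by
    intro h
    rw [h] at hab₀; simp at hab₀
  set c : ℝ := ‖ζ‖ with hcdef
  have hc0 : 0 < c := hab₀
  have hc1 : c < 1 := hab₁
  set β : 𝕜 := (c : 𝕜) / ζ with hβ
  have hβn : ‖β‖ = 1 := by
    rw [hβ, norm_div, RCLike.norm_ofReal, abs_of_pos hc0]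
    exact div_self (ne_of_gt hab₀)
  set b' : H := β • b with hb'def
  have hb'n : ‖b'‖ = 1 := by rw [hb'def, norm_smul, hβn, hb, one_mul]
  have hab' : (inner 𝕜 a b' : 𝕜) = (c : 𝕜) := by
    rw [hb'def, inner_smul_right, ← hζ, hβ, div_mul_cancel₀ _ hζ0]
  have hb'a : (inner 𝕜 b' a : 𝕜) = (c : 𝕜) := by
    rw [← inner_conj_symm b' a, hab', RCLike.conj_ofReal]
  have haa : (inner 𝕜 a a : 𝕜) = 1 := by
    rw [inner_self_eq_norm_sq_to_K, ha]; norm_num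
  have hb'b' : (inner 𝕜 b' b' : 𝕜) = 1 := by
    rw [inner_self_eq_norm_sq_to_K, hb'n]; norm_num
  have hs2 : (0:ℝ) < 1 - c^2 := by nlinarith
  set s : ℝ := Real.sqrt (1 - c^2) with hsdef
  have hs : s^2 = 1 - c^2 := Real.sq_sqrt hs2.le
  have hsp : 0 < s := Real.sqrt_pos.mpr hs2
  set e1 : H := ((s⁻¹ : ℝ) : 𝕜) • (b' - (c:𝕜) • a) with he1
  have hae1 : (inner 𝕜 a e1 : 𝕜) = 0 := by
    rw [he1]
    simp only [inner_smul_right, inner_sub_right]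
    rw [hab', haa]; ring
  have he1a : (inner 𝕜 e1 a : 𝕜) = 0 := inner_eq_zero_symm.mp hae1
  have hvv : (inner 𝕜 (b' - (c:𝕜) • a) (b' - (c:𝕜) • a) : 𝕜) = ((1 - c^2 : ℝ) : 𝕜) := by
    simp only [inner_sub_left, inner_sub_right, inner_smul_left, inner_smul_right]
    rw [hab', hb'a, haa, hb'b', RCLike.conj_ofReal]
    push_cast
    ring
  have he1e1 : (inner 𝕜 e1 e1 : 𝕜) = 1 := by
    rw [he1, inner_smul_left, inner_smul_right, hvv, RCLike.conj_ofReal]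
    have : ((s⁻¹ : ℝ) : 𝕜) * (((s⁻¹ : ℝ) : 𝕜) * ((1 - c^2 : ℝ) : 𝕜))
        = (((s⁻¹ * (s⁻¹ * (1 - c^2))) : ℝ) : 𝕜) := by push_cast; ring
    rw [this, ← hs]
    rw [show s⁻¹ * (s⁻¹ * s^2) = 1 by field_simp]
    norm_num
  -- e2
  obtain ⟨x2, hx2mem, hx2ne⟩ :
      ∃ x2, x2 ∈ (Submodule.span 𝕜 {a, b'})ᗮ ∧ x2 ≠ 0 := by
    by_contra hcon
    push_neg at hcon
    have hbot : (Submodule.span 𝕜 {a, b'})ᗮ = ⊥ := by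
      rw [Submodule.eq_bot_iff]
      intro y hy
      by_contra hy0
      exact hy0 (hcon y hy)
    have htop : Submodule.span 𝕜 {a, b'} = ⊤ := Submodule.orthogonal_eq_bot_iff.mp hbot
    have hle : Module.finrank 𝕜 (Submodule.span 𝕜 ({a, b'} : Set H)) ≤ 2 := by
      have h2 : ({a, b'} : Set H) = (({a, b'} : Finset H) : Set H) := by simp
      rw [h2]
      refine le_trans (finrank_span_finset_le_card _) ?_
      exact le_trans (Finset.card_insert_le _ _) (by simp)
    rw [htop, finrank_top] at hle
    omega
  set e2 : H := ((‖x2‖⁻¹ : ℝ) : 𝕜) • x2 with he2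
  have he2mem : e2 ∈ (Submodule.span 𝕜 {a, b'})ᗮ :=
    Submodule.smul_mem _ _ hx2mem
  have hx2pos : (0:ℝ) < ‖x2‖ := norm_pos_iff.mpr hx2ne
  have he2n : ‖e2‖ = 1 := by
    rw [he2, norm_smul, RCLike.norm_ofReal, abs_of_pos (by positivity : (0:ℝ) < ‖x2‖⁻¹)]
    field_simp
  have he2e2 : (inner 𝕜 e2 e2 : 𝕜) = 1 := by
    rw [inner_self_eq_norm_sq_to_K, he2n]; norm_num
  have hamem : a ∈ Submodule.span 𝕜 ({a, b'} : Set H) :=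
    Submodule.subset_span (by simp)
  have hb'mem : b' ∈ Submodule.span 𝕜 ({a, b'} : Set H) :=
    Submodule.subset_span (by simp)
  have hae2 : (inner 𝕜 a e2 : 𝕜) = 0 :=
    Submodule.inner_right_of_mem_orthogonal hamem he2mem
  have he2a : (inner 𝕜 e2 a : 𝕜) = 0 := inner_eq_zero_symm.mp hae2
  have hb'e2 : (inner 𝕜 b' e2 : 𝕜) = 0 :=
    Submodule.inner_right_of_mem_orthogonal hb'mem he2mem
  have he1e2 : (inner 𝕜 e1 e2 : 𝕜) = 0 := by
    rw [he1]
    simp only [inner_smul_left, inner_sub_left]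
    rw [hb'e2, hae2]; ring
  have he2e1 : (inner 𝕜 e2 e1 : 𝕜) = 0 := inner_eq_zero_symm.mp he1e2
  -- the coordinate map
  set φ : F3 → H :=
    fun v => ((v 0 : ℝ) : 𝕜) • e1 + ((v 1 : ℝ) : 𝕜) • e2 + ((v 2 : ℝ) : 𝕜) • a with hφ
  have hφinner : ∀ x y : F3, (inner 𝕜 (φ x) (φ y) : 𝕜) = ((d3 x y : ℝ) : 𝕜) := by
    intro x y
    rw [hφ]
    simp only [d3, inner_add_left, inner_add_right, inner_smul_left, inner_smul_right,
      he1e1, he2e2, haa, hae1, he1a, hae2, he2a, he1e2, he2e1, RCLike.conj_ofReal]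
    push_cast
    ring
  have hφorth : ∀ x y : F3, d3 x y = 0 → (inner 𝕜 (φ x) (φ y) : 𝕜) = 0 := by
    intro x y h
    rw [hφinner, h]; norm_num
  have hφnorm : ∀ v : F3, d3 v v = 1 → ‖φ v‖ = 1 := by
    intro v hv
    have h2 := hφinner v v
    rw [hv, inner_self_eq_norm_sq_to_K] at h2
    have h3 : ((‖φ v‖^2 : ℝ) : 𝕜) = ((1:ℝ) : 𝕜) := by push_cast; simp [h2]
    have h4 : ‖φ v‖^2 = 1 := RCLike.ofReal_injective (K := 𝕜)  h3
    nlinarith [norm_nonneg (φ v)]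
  have hφa : φ ![0,0,1] = a := by
    rw [hφ]
    simp
  have hφb' : φ ![s,0,c] = b' := by
    rw [hφ]
    simp only [Matrix.cons_val_zero, Matrix.cons_val_one, Matrix.head_cons,
      Matrix.cons_val_two, Matrix.tail_cons]
    rw [he1, smul_smul]
    have hcast : ((s : ℝ) : 𝕜) * ((s⁻¹ : ℝ) : 𝕜) = 1 := by
      rw [← RCLike.ofReal_mul, mul_inv_cancel₀ hsp.ne']
      norm_num
    rw [hcast, one_smul]
    simp
  have norm1 : ∀ x : H, (inner 𝕜 x x : 𝕜) = 1 → ‖x‖ = 1 := by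
    intro x hx
    rw [inner_self_eq_norm_sq_to_K] at hx
    have h3 : ((‖x‖^2 : ℝ) : 𝕜) = ((1:ℝ) : 𝕜) := by push_cast; simp [hx]
    have h4 : ‖x‖^2 = 1 := RCLike.ofReal_injective (K := 𝕜) h3
    nlinarith [norm_nonneg x]
  -- the span T and its orthocomplement
  have honE : Orthonormal 𝕜 (![e1, e2, a] : Fin 3 → H) := by
    constructor
    · intro i
      fin_cases i
      · exact norm1 e1 he1e1
      · exact norm1 e2 he2e2
      · exact norm1 a haa
    · intro i j hij
      fin_cases i <;> fin_cases j <;>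
        first
          | exact absurd rfl hij
          | exact he1e2
          | exact he2e1
          | exact he1a
          | exact he2a
          | exact hae1
          | exact hae2
          | simp_all
  set T : Submodule 𝕜 H := Submodule.span 𝕜 (Set.range ![e1, e2, a]) with hT
  have hφmemT : ∀ v : F3, φ v ∈ T := by
    intro v
    rw [hφ, hT]
    refine Submodule.add_mem _ (Submodule.add_mem _ ?_ ?_) ?_ <;>
      refine Submodule.smul_mem _ _ (Submodule.subset_span ?_)
    · exact ⟨0, rfl⟩
    · exact ⟨1, rfl⟩
    · exact ⟨2, rfl⟩
  have hTrank : Module.finrank 𝕜 T = 3 := by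
    rw [hT, finrank_span_eq_card honE.linearIndependent]
    simp
  set d : ℕ := Module.finrank 𝕜 Tᗮ with hdd
  have hd : 3 + d = n := by
    have := Submodule.finrank_add_finrank_orthogonal T
    rw [hTrank] at this
    omega
  set Fstd := stdOrthonormalBasis 𝕜 Tᗮ with hFstd
  set Ff : Fin d → H := fun j => ((Fstd j : Tᗮ) : H) with hFf
  have hFnorm : ∀ j, ‖Ff j‖ = 1 := by
    intro j
    rw [hFf]
    have := Fstd.orthonormal.1 j
    exact this
  have hFmem : ∀ j, Ff j ∈ Tᗮ := fun j => (Fstd j).2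
  have hFinner : ∀ i j, i ≠ j → (inner 𝕜 (Ff i) (Ff j) : 𝕜) = 0 := by
    intro i j hij
    have h0 := Fstd.orthonormal.2 hij
    rw [hFf]
    simpa [← Submodule.coe_inner] using h0
  have hφF : ∀ (v : F3) j, (inner 𝕜 (φ v) (Ff j) : 𝕜) = 0 := fun v j =>
    Submodule.inner_right_of_mem_orthogonal (hφmemT v) (hFmem j)
  have hFφ : ∀ (v : F3) j, (inner 𝕜 (Ff j) (φ v) : 𝕜) = 0 := fun v j =>
    inner_eq_zero_symm.mp (hφF v j)
  -- R3 data
  have h1sc : s^2 + c^2 = 1 := by linarith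
  obtain ⟨L, hLu, mA, mB, mxh, mY, mZB, refuter⟩ := R3main s c hsp hc0 hc1 h1sc
  -- the finite set
  set Γ : Finset H := ((L.map φ).toFinset ∪ Finset.image Ff Finset.univ) ∪ {b} with hΓ
  have hφΓ : ∀ v ∈ L, φ v ∈ Γ := by
    intro v hv
    rw [hΓ]
    exact Finset.mem_union_left _ (Finset.mem_union_left _
      (List.mem_toFinset.mpr (List.mem_map_of_mem (f := φ) hv)))
  have hFΓ : ∀ j, Ff j ∈ Γ := by
    intro j
    rw [hΓ]
    exact Finset.mem_union_left _ (Finset.mem_union_right _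
      (Finset.mem_image_of_mem _ (Finset.mem_univ j)))
  have hbΓ : b ∈ Γ := by rw [hΓ]; exact Finset.mem_union_right _ (Finset.mem_singleton_self b)
  have haΓ : a ∈ Γ := hφa ▸ hφΓ _ mA
  have hb'Γ : b' ∈ Γ := hφb' ▸ hφΓ _ mB
  -- main sum rule
  have main_sum : ∀ p : H → ℝ,
      (∀ b0 : OrthonormalBasis (Fin n) 𝕜 H, (∀ j, b0 j ∈ Γ) → ∑ j, p (b0 j) = 1) →
      ∀ x y z : F3, d3 x x = 1 → d3 y y = 1 → d3 z z = 1 →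
      d3 x y = 0 → d3 x z = 0 → d3 y z = 0 → x ∈ L → y ∈ L → z ∈ L →
      p (φ x) + p (φ y) + p (φ z) + (∑ j, p (Ff j)) = 1 := by
    intro p hpsum x y z hxx hyy hzz oxy oxz oyz hxL hyL hzL
    have oyx : d3 y x = 0 := by rw [d3_comm]; exact oxy
    have ozx : d3 z x = 0 := by rw [d3_comm]; exact oxz
    have ozy : d3 z y = 0 := by rw [d3_comm]; exact oyz
    set g : Fin 3 ⊕ Fin d → H := Sum.elim ![φ x, φ y, φ z] Ff with hg
    have hgon : Orthonormal 𝕜 g := by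
      constructor
      · rintro (i|j)
        · fin_cases i
          · exact hφnorm x hxx
          · exact hφnorm y hyy
          · exact hφnorm z hzz
        · exact hFnorm j
      · rintro (i|i) (j|j) hij
        · have hij' : i ≠ j := by simpa using hij
          fin_cases i <;> fin_cases j <;>
            first
              | exact absurd rfl hij'
              | exact hφorth x y oxy
              | exact hφorth x z oxz
              | exact hφorth y z oyz
              | exact hφorth y x oyx
              | exact hφorth z x ozx
              | exact hφorth z y ozy
              | simp_all
        · fin_cases i
          · exact hφF x _
          · exact hφF y _
          · exact hφF z _
        · fin_cases j
          · exact hFφ x _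
          · exact hFφ y _
          · exact hFφ z _
        · exact hFinner _ _ (by simpa using hij)
    have hcard : Fintype.card (Fin 3 ⊕ Fin d) = Module.finrank 𝕜 H := by
      simp only [Fintype.card_sum, Fintype.card_fin]
      rw [← hnn]; omega
    set bas := basisOfOrthonormalOfCardEqFinrank hgon hcard with hbas
    have hbascoe : ⇑bas = g := coe_basisOfOrthonormalOfCardEqFinrank hgon hcard
    set onb := bas.toOrthonormalBasis (by rwa [hbascoe]) with honbdef
    have honb : ⇑onb = g := by
      rw [honbdef, Module.Basis.coe_toOrthonormalBasis, hbascoe]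
    set e : (Fin 3 ⊕ Fin d) ≃ Fin n := finSumFinEquiv.trans (finCongr hd) with he
    set onb' : OrthonormalBasis (Fin n) 𝕜 H := onb.reindex e with honb'def
    have honb' : ∀ j, onb' j = g (e.symm j) := by
      intro j
      have h5 : onb' j = (⇑onb ∘ ⇑e.symm) j := by
        rw [honb'def, OrthonormalBasis.coe_reindex]
      rw [h5, Function.comp_apply, honb]
    have hmemb : ∀ j, onb' j ∈ Γ := by
      intro j
      rw [honb' j]
      rcases h6 : e.symm j with i | i
      · rw [hg]
        fin_cases i
        · exact hφΓ x hxL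
        · exact hφΓ y hyL
        · exact hφΓ z hzL
      · rw [hg]
        exact hFΓ i
    have hsum1 := hpsum onb' hmemb
    have hsum2 : ∑ j, p (onb' j) = ∑ i, p (g i) := by
      calc ∑ j, p (onb' j) = ∑ j, p (g (e.symm j)) := by
            apply Finset.sum_congr rfl
            intro j _
            rw [honb' j]
        _ = ∑ i, p (g i) := Equiv.sum_comp e.symm (fun i => p (g i))
    have hsum3 : ∑ i, p (g i) = p (g (Sum.inl 0)) + p (g (Sum.inl 1)) + p (g (Sum.inl 2))
        + ∑ j : Fin d, p (g (Sum.inr j)) := by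
      rw [Fintype.sum_sum_type]
      rw [Fin.sum_univ_three]
    have hval : p (g (Sum.inl 0)) = p (φ x) ∧ p (g (Sum.inl 1)) = p (φ y)
        ∧ p (g (Sum.inl 2)) = p (φ z) ∧ ∀ j, p (g (Sum.inr j)) = p (Ff j) := by
      refine ⟨?_, ?_, ?_, fun j => ?_⟩ <;> rw [hg] <;> simp
    obtain ⟨hv1, hv2, hv3, hv4⟩ := hval
    have hsum4 : ∑ j : Fin d, p (g (Sum.inr j)) = ∑ j, p (Ff j) :=
      Finset.sum_congr rfl (fun j _ => hv4 j)
    rw [hsum2, hsum3, hv1, hv2, hv3, hsum4] at hsum1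
    linarith
  refine ⟨Γ, ?_, haΓ, hbΓ, ?_⟩
  · intro x hx
    rw [hΓ] at hx
    rcases Finset.mem_union.mp hx with hx1 | hx2
    · rcases Finset.mem_union.mp hx1 with hx3 | hx4
      · obtain ⟨v, hv, rfl⟩ := List.mem_map.mp (List.mem_toFinset.mp hx3)
        exact hφnorm v (hLu v hv)
      · obtain ⟨j, -, rfl⟩ := Finset.mem_image.mp hx4
        exact hFnorm j
    · rw [Finset.mem_singleton.mp hx2]; exact hb
  · rintro p ⟨hp0, hpinv, hpsum⟩ pa01 pb01
    have hpb' : p b' = p b := by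
      have h7 := hpinv β b hbΓ hβn (by rw [← hb'def]; exact hb'Γ)
      rw [← hb'def] at h7
      exact h7
    have hSnn : 0 ≤ ∑ j, p (Ff j) := Finset.sum_nonneg fun j _ => hp0 _ (hFΓ j)
    have uA : d3 (![0,0,1] : F3) ![0,0,1] = 1 := by rw [d3v]; norm_num
    have uB : d3 (![s,0,c] : F3) ![s,0,c] = 1 := by rw [d3v]; linarith [h1sc]
    have uxh : d3 (![1,0,0] : F3) ![1,0,0] = 1 := by rw [d3v]; norm_num
    have uY : d3 (![0,1,0] : F3) ![0,1,0] = 1 := by rw [d3v]; norm_num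
    have uZB : d3 (![c,0,-s] : F3) ![c,0,-s] = 1 := by rw [d3v]; linarith [h1sc]
    have oAxh : d3 (![0,0,1] : F3) ![1,0,0] = 0 := by rw [d3v]; ring
    have oAY : d3 (![0,0,1] : F3) ![0,1,0] = 0 := by rw [d3v]; ring
    have oxhY : d3 (![1,0,0] : F3) ![0,1,0] = 0 := by rw [d3v]; ring
    have oBY : d3 (![s,0,c] : F3) ![0,1,0] = 0 := by rw [d3v]; ring
    have oBZB : d3 (![s,0,c] : F3) ![c,0,-s] = 0 := by rw [d3v]; ring
    have oYZB : d3 (![0,1,0] : F3) ![c,0,-s] = 0 := by rw [d3v]; ring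
    have tail : (∑ j, p (Ff j)) = 0 → p a = 0 ∧ p b = 0 := by
      intro hS0
      have hqn : nneg L (fun v => p (φ v)) := fun v hv => hp0 _ (hφΓ v hv)
      have hqt : trule L (fun v => p (φ v)) := by
        intro x hx y hy z hz o1 o2 o3
        have h8 := main_sum p hpsum x y z (hLu x hx) (hLu y hy) (hLu z hz) o1 o2 o3 hx hy hz
        rw [hS0] at h8
        show p (φ x) + p (φ y) + p (φ z) = 1
        linarith
      have hqA : p (φ ![0,0,1]) = p a := congrArg p hφa
      have hqB : p (φ ![s,0,c]) = p b := (congrArg p hφb').trans hpb'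
      obtain ⟨h1, h2⟩ := refuter (fun v => p (φ v)) hqn hqt
        (by show p (φ ![0,0,1]) = 0 ∨ p (φ ![0,0,1]) = 1; rw [hqA]; exact pa01)
        (by show p (φ ![s,0,c]) = 0 ∨ p (φ ![s,0,c]) = 1; rw [hqB]; exact pb01)
      have h1' : p (φ ![0,0,1]) = 0 := h1
      have h2' : p (φ ![s,0,c]) = 0 := h2
      rw [hqA] at h1'
      rw [hqB] at h2'
      exact ⟨h1', h2'⟩
    rcases pa01 with ha0 | ha1 <;> rcases pb01 with hb0 | hb1
    · exact ⟨ha0, hb0⟩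
    · -- p a = 0, p b = 1
      apply tail
      have hpφB : p (φ ![s,0,c]) = 1 := by
        rw [congrArg p hφb', hpb']; exact hb1
      have h9 := main_sum p hpsum ![s,0,c] ![0,1,0] ![c,0,-s] uB uY uZB oBY oBZB oYZB mB mY mZB
      have n1 := hp0 _ (hφΓ _ mY)
      have n2 := hp0 _ (hφΓ _ mZB)
      linarith
    · -- p a = 1, p b = 0
      apply tail
      have hpφA : p (φ ![0,0,1]) = 1 := by rw [congrArg p hφa]; exact ha1
      have h9 := main_sum p hpsum ![0,0,1] ![1,0,0] ![0,1,0] uA uxh uY oAxh oAY oxhY mA mxh mY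
      have n1 := hp0 _ (hφΓ _ mxh)
      have n2 := hp0 _ (hφΓ _ mY)
      linarith
    · -- p a = 1, p b = 1
      apply tail
      have hpφA : p (φ ![0,0,1]) = 1 := by rw [congrArg p hφa]; exact ha1
      have h9 := main_sum p hpsum ![0,0,1] ![1,0,0] ![0,1,0] uA uxh uY oAxh oAY oxhY mA mxh mY
      have n1 := hp0 _ (hφΓ _ mxh)
      have n2 := hp0 _ (hφΓ _ mY)
      linarith
end

section
/- Let a and b be unit vectors in ℝ³ with 0 < |⟨a, b⟩| < 1. Then there is a finite set Γ of unit vectors in ℝ³, closed under negation, with a, b ∈ Γ, such that every state p on Γ with p(a) = 1 satisfies 0 < p(b) < 1. -/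
/-- A state on a finite set `Γ` of unit vectors in `ℝ³` (closed under negation):
a function `p : ℝ³ → ℝ` that is nonnegative on `Γ`, satisfies `p (-x) = p x` on `Γ`,
and `p x + p y + p z = 1` for every triple of mutually orthogonal vectors of `Γ`. -/
def IsStateOn (Γ : Finset (EuclideanSpace ℝ (Fin 3)))
    (p : EuclideanSpace ℝ (Fin 3) → ℝ) : Prop :=
  (∀ x ∈ Γ, 0 ≤ p x) ∧ (∀ x ∈ Γ, p (-x) = p x) ∧
  ∀ x ∈ Γ, ∀ y ∈ Γ, ∀ z ∈ Γ, (inner ℝ x y : ℝ) = 0 → (inner ℝ x z : ℝ) = 0 →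
    (inner ℝ y z : ℝ) = 0 → p x + p y + p z = 1

/-!
If a state gives `P` and `Q` the value `1`, it gives `0` to every unit `x ⊥ P`, to every unit
`y ⊥ Q`, and hence `1` to the unit vector completing an orthogonal pair `x ⊥ y`. Taking
`y ∥ Q × x` this forces the normalized component of `Q` orthogonal to `x` to the value `1`.
Doing this for two unit vectors `x, x' ⊥ P` placed symmetrically about the plane of `P` and `Q`
produces a new pair of forced vectors whose inner product `c'` depends on `c = ⟪P, Q⟫` and on
the position of `x`: one choice gives `c' = 2c²/(1+c²)`, so `|c|` shrinks geometrically, and once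
`c² ≤ 1/9` another choice makes the new pair orthogonal, which no state allows. Hence any two
unit vectors with `|⟪P, Q⟫| < 1` are refuted by a finite gadget.

For the theorem complete `b` to an orthonormal frame `b, w, e` with `e ⊥ a`: `p a = 1` forces
`p e = 0`, so `p b + p w = 1`, while the gadgets for `(a, b)` and `(a, w)` rule out
`p b = 1` and `p w = 1`.
-/

open scoped RealInnerProductSpace Matrix

local notation "ℝ³" => EuclideanSpace ℝ (Fin 3)

section InnerProductSpace

variable {F : Type*} [NormedAddCommGroup F] [InnerProductSpace ℝ F]

lemma real_inner_normalize_normalize (u v : F) :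
    ⟪NormedSpace.normalize u, NormedSpace.normalize v⟫ = ⟪u, v⟫ / (‖u‖ * ‖v‖) := by
  rw [NormedSpace.normalize, NormedSpace.normalize, real_inner_smul_left, real_inner_smul_right]
  field_simp

variable {x Q : F}

lemma inner_sub_inner_smul_self (hx : ‖x‖ = 1) : ⟪x, Q - ⟪x, Q⟫ • x⟫ = 0 := by
  rw [inner_sub_right, real_inner_smul_right, real_inner_self_eq_norm_sq, hx]
  ring

lemma norm_sub_inner_smul_sq (hx : ‖x‖ = 1) (hQ : ‖Q‖ = 1) :
    ‖Q - ⟪x, Q⟫ • x‖ ^ 2 = 1 - ⟪x, Q⟫ ^ 2 := by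
  rw [norm_sub_sq_real, real_inner_smul_right, norm_smul, Real.norm_eq_abs, mul_pow, sq_abs,
    hx, hQ, real_inner_comm]
  ring

lemma sub_inner_smul_ne_zero (hx : ‖x‖ = 1) (hQ : ‖Q‖ = 1) (hxQ : |⟪x, Q⟫| < 1) :
    Q - ⟪x, Q⟫ • x ≠ 0 := by
  intro h
  have h' := norm_sub_inner_smul_sq hx hQ
  rw [h, norm_zero] at h'
  nlinarith [abs_lt.mp hxQ]

lemma inner_normalize_sub_smul_normalize_sub_smul {Q x x' : F} {σ : ℝ} (hQ : ‖Q‖ = 1)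
    (hx : ‖x‖ = 1) (hx' : ‖x'‖ = 1) (hxQ : ⟪x, Q⟫ = σ) (hx'Q : ⟪x', Q⟫ = σ) :
    ⟪NormedSpace.normalize (Q - σ • x), NormedSpace.normalize (Q - σ • x')⟫ =
      (1 - 2 * σ ^ 2 + σ ^ 2 * ⟪x, x'⟫) / (1 - σ ^ 2) := by
  have hn := norm_sub_inner_smul_sq hx hQ
  have hn' := norm_sub_inner_smul_sq hx' hQ
  rw [hxQ] at hn
  rw [hx'Q] at hn'
  have hnorm : ‖Q - σ • x‖ * ‖Q - σ • x'‖ = 1 - σ ^ 2 := by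
    rw [← hn, (sq_eq_sq₀ (norm_nonneg _) (norm_nonneg _)).1 (hn.trans hn'.symm), sq]
  rw [real_inner_normalize_normalize, hnorm]
  congr 1
  simp only [inner_sub_left, inner_sub_right, real_inner_smul_left, real_inner_smul_right,
    real_inner_self_eq_norm_sq, hQ, real_inner_comm x' Q, hxQ, hx'Q]
  ring

end InnerProductSpace

lemma two_mul_sq_div_one_add_sq_le {a c₀ : ℝ} (ha : 0 ≤ a) (hac₀ : a ≤ c₀) (hc₀ : c₀ ≤ 1) :
    2 * a ^ 2 / (1 + a ^ 2) ≤ 2 * c₀ / (1 + c₀ ^ 2) * a := by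
  rw [div_mul_eq_mul_div, div_le_div_iff₀ (by positivity) (by positivity)]
  nlinarith [mul_nonneg (mul_nonneg ha (sub_nonneg.2 hac₀))
    (by nlinarith : 0 ≤ 1 - a * c₀)]

open Pointwise in
lemma exists_neg_closed_superset {E : Type*} [SeminormedAddCommGroup E] [DecidableEq E]
    (T : Finset E) (hT : ∀ x ∈ T, ‖x‖ = 1) :
    ∃ Γ : Finset E, (∀ x ∈ Γ, ‖x‖ = 1) ∧ (∀ x ∈ Γ, -x ∈ Γ) ∧ T ⊆ Γ := by
  refine ⟨T ∪ -T, ?_, ?_, Finset.subset_union_left⟩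
  · simp only [Finset.mem_union, Finset.mem_neg']
    rintro x (hx | hx)
    exacts [hT x hx, norm_neg x ▸ hT _ hx]
  · simp only [Finset.mem_union, Finset.mem_neg', neg_neg]
    exact fun x => Or.symm

namespace KochenSpecker

open WithLp

noncomputable def cross (u v : ℝ³) : ℝ³ := toLp 2 (ofLp u ⨯₃ ofLp v)

lemma inner_cross_left (u v : ℝ³) : ⟪u, cross u v⟫ = 0 := by
  rw [cross, EuclideanSpace.inner_eq_star_dotProduct, star_trivial, dotProduct_comm]
  exact dot_self_cross _ _

lemma inner_cross_right (u v : ℝ³) : ⟪v, cross u v⟫ = 0 := by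
  rw [cross, EuclideanSpace.inner_eq_star_dotProduct, star_trivial, dotProduct_comm]
  exact dot_cross_self _ _

lemma norm_cross_sq (u v : ℝ³) : ‖cross u v‖ ^ 2 = ‖u‖ ^ 2 * ‖v‖ ^ 2 - ⟪u, v⟫ ^ 2 := by
  simp only [← real_inner_self_eq_norm_sq, EuclideanSpace.inner_eq_star_dotProduct, cross,
    star_trivial, cross_dot_cross, dotProduct_comm (ofLp v) (ofLp u)]
  ring

lemma norm_cross_eq_one {u v : ℝ³} (hu : ‖u‖ = 1) (hv : ‖v‖ = 1) (huv : ⟪u, v⟫ = 0) :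
    ‖cross u v‖ = 1 := by
  have h := norm_cross_sq u v
  rw [hu, hv, huv] at h
  exact (pow_eq_one_iff_of_nonneg (norm_nonneg _) two_ne_zero).1 (by simpa using h)

lemma exists_orthonormal_frame {P Q : ℝ³} (hP : ‖P‖ = 1) (hQ : ‖Q‖ = 1)
    (hPQ : |⟪P, Q⟫| < 1) :
    ∃ u v : ℝ³, ‖u‖ = 1 ∧ ‖v‖ = 1 ∧ ⟪P, u⟫ = 0 ∧ ⟪P, v⟫ = 0 ∧ ⟪u, v⟫ = 0 ∧
      Q = ⟪P, Q⟫ • P + √(1 - ⟪P, Q⟫ ^ 2) • u := by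
  set w := Q - ⟪P, Q⟫ • P
  have hw : ‖w‖ = √(1 - ⟪P, Q⟫ ^ 2) := by
    rw [← norm_sub_inner_smul_sq hP hQ, Real.sqrt_sq (norm_nonneg _)]
  have hu : ‖NormedSpace.normalize w‖ = 1 :=
    NormedSpace.norm_normalize_eq_one_iff.2 (sub_inner_smul_ne_zero hP hQ hPQ)
  have hPu : ⟪P, NormedSpace.normalize w⟫ = 0 := by
    rw [NormedSpace.normalize, real_inner_smul_right, inner_sub_inner_smul_self hP, mul_zero]
  refine ⟨_, _, hu, norm_cross_eq_one hP hu hPu, hPu, inner_cross_left _ _,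
    inner_cross_right _ _, ?_⟩
  rw [← hw, NormedSpace.norm_smul_normalize, add_sub_cancel]

lemma exists_pair_orthogonal_symmetric {P Q : ℝ³} (hP : ‖P‖ = 1) (hQ : ‖Q‖ = 1)
    (hPQ : |⟪P, Q⟫| < 1) {t : ℝ} (ht₀ : 0 ≤ t) (ht₁ : t ≤ 1) :
    ∃ x x' : ℝ³, ‖x‖ = 1 ∧ ‖x'‖ = 1 ∧ ⟪P, x⟫ = 0 ∧ ⟪P, x'⟫ = 0 ∧
      ⟪x, Q⟫ = √(1 - ⟪P, Q⟫ ^ 2) * √t ∧ ⟪x', Q⟫ = √(1 - ⟪P, Q⟫ ^ 2) * √t ∧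
      ⟪x, x'⟫ = 2 * t - 1 := by
  obtain ⟨u, v, hu, hv, hPu, hPv, huv, hQ_eq⟩ := exists_orthonormal_frame hP hQ hPQ
  have hα : √t ^ 2 = t := Real.sq_sqrt ht₀
  have hβ : √(1 - t) ^ 2 = 1 - t := Real.sq_sqrt (by linarith)
  have hup : ⟪u, P⟫ = 0 := by rw [real_inner_comm]; exact hPu
  have hvp : ⟪v, P⟫ = 0 := by rw [real_inner_comm]; exact hPv
  have hvu : ⟪v, u⟫ = 0 := by rw [real_inner_comm]; exact huv
  have huu : ⟪u, u⟫ = 1 := by rw [real_inner_self_eq_norm_sq, hu, one_pow]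
  have hvv : ⟪v, v⟫ = 1 := by rw [real_inner_self_eq_norm_sq, hv, one_pow]
  have hnorm : ∀ z : ℝ³, ⟪z, z⟫ = 1 → ‖z‖ = 1 := fun z hz => by
    rwa [← pow_eq_one_iff_of_nonneg (norm_nonneg z) two_ne_zero, ← real_inner_self_eq_norm_sq]
  refine ⟨√t • u + √(1 - t) • v, √t • u - √(1 - t) • v, hnorm _ ?_, hnorm _ ?_, ?_, ?_, ?_, ?_, ?_⟩
  · simp only [inner_add_left, inner_add_right, real_inner_smul_left, real_inner_smul_right,
      huu, hvv, huv, hvu]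
    linear_combination hα + hβ
  · simp only [inner_sub_left, inner_sub_right, real_inner_smul_left, real_inner_smul_right,
      huu, hvv, huv, hvu]
    linear_combination hα + hβ
  · simp only [inner_add_right, real_inner_smul_right, hPu, hPv]; ring
  · simp only [inner_sub_right, real_inner_smul_right, hPu, hPv]; ring
  · nth_rw 1 [hQ_eq]
    simp only [inner_add_left, inner_add_right, real_inner_smul_left, real_inner_smul_right,
      huu, hvu, hup, hvp]
    ring
  · nth_rw 1 [hQ_eq]
    simp only [inner_sub_left, inner_add_right, real_inner_smul_left, real_inner_smul_right,
      huu, hvu, hup, hvp]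
    ring
  · simp only [inner_add_left, inner_sub_right, real_inner_smul_left, real_inner_smul_right,
      huu, hvv, huv, hvu]
    linear_combination hα - hβ

lemma exists_orthonormal_pair_perp {a b : ℝ³} (ha : ‖a‖ = 1) (hb : ‖b‖ = 1)
    (hab₀ : 0 < |⟪a, b⟫|) (hab₁ : |⟪a, b⟫| < 1) :
    ∃ w e : ℝ³, ‖w‖ = 1 ∧ ‖e‖ = 1 ∧ ⟪b, w⟫ = 0 ∧ ⟪b, e⟫ = 0 ∧ ⟪w, e⟫ = 0 ∧
      ⟪a, e⟫ = 0 ∧ |⟪a, w⟫| < 1 := by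
  rw [real_inner_comm] at hab₀ hab₁
  obtain ⟨w, e, hw, he, hbw, hbe, hwe, ha_eq⟩ := exists_orthonormal_frame hb ha hab₁
  refine ⟨w, e, hw, he, hbw, hbe, hwe, ?_, ?_⟩
  · nth_rw 1 [ha_eq]
    rw [inner_add_left, real_inner_smul_left, real_inner_smul_left, hbe, hwe]
    ring
  · have haw : ⟪a, w⟫ = √(1 - ⟪b, a⟫ ^ 2) := by
      nth_rw 1 [ha_eq]
      rw [inner_add_left, real_inner_smul_left, real_inner_smul_left, hbw,
        real_inner_self_eq_norm_sq, hw]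
      ring
    rw [haw, abs_of_nonneg (Real.sqrt_nonneg _), Real.sqrt_lt' one_pos]
    nlinarith [sq_abs ⟪b, a⟫]

end KochenSpecker

open KochenSpecker

namespace IsStateOn

variable {S T : Finset ℝ³} {p : ℝ³ → ℝ}

lemma mono (hp : IsStateOn T p) (hST : S ⊆ T) : IsStateOn S p :=
  ⟨fun x hx => hp.1 x (hST hx), fun x hx => hp.2.1 x (hST hx),
    fun x hx y hy z hz => hp.2.2 x (hST hx) y (hST hy) z (hST hz)⟩

lemma eq_zero_of_eq_one (hp : IsStateOn S p) {u v : ℝ³} (hu : u ∈ S) (hv : v ∈ S)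
    (huv : cross u v ∈ S) (h : ⟪u, v⟫ = 0) (hpu : p u = 1) : p v = 0 := by
  have := hp.2.2 u hu v hv _ huv h (inner_cross_left u v) (inner_cross_right u v)
  linarith [hp.1 v hv, hp.1 _ huv]

lemma eq_one_of_eq_zero (hp : IsStateOn S p) {u v w : ℝ³} (hu : u ∈ S) (hv : v ∈ S)
    (hw : w ∈ S) (huv : ⟪u, v⟫ = 0) (huw : ⟪u, w⟫ = 0) (hvw : ⟪v, w⟫ = 0)
    (hpu : p u = 0) (hpv : p v = 0) : p w = 1 := by
  linarith [hp.2.2 u hu v hv w hw huv huw hvw]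

lemma pos_and_lt_one_of_ne_one (hp : IsStateOn S p) {u v w : ℝ³} (hu : u ∈ S) (hv : v ∈ S)
    (hw : w ∈ S) (huv : ⟪u, v⟫ = 0) (huw : ⟪u, w⟫ = 0) (hvw : ⟪v, w⟫ = 0)
    (hpw : p w = 0) (hpu : p u ≠ 1) (hpv : p v ≠ 1) : 0 < p u ∧ p u < 1 := by
  have hsum := hp.2.2 u hu v hv w hw huv huw hvw
  have hu0 := hp.1 u hu
  have hv0 := hp.1 v hv
  constructor
  · exact lt_of_le_of_ne hu0 fun h => hpv (by linarith)
  · exact lt_of_le_of_ne (by linarith) hpu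

end IsStateOn

namespace KochenSpecker

def Incompatible (P Q : ℝ³) : Prop :=
  ∃ S : Finset ℝ³, (∀ x ∈ S, ‖x‖ = 1) ∧ P ∈ S ∧ Q ∈ S ∧
    ∀ p, IsStateOn S p → p P = 1 → p Q ≠ 1

def Forces (P Q n : ℝ³) : Prop :=
  ∃ S : Finset ℝ³, (∀ x ∈ S, ‖x‖ = 1) ∧ P ∈ S ∧ Q ∈ S ∧ n ∈ S ∧
    ∀ p, IsStateOn S p → p P = 1 → p Q = 1 → p n = 1

lemma Forces.norm_eq_one {P Q n : ℝ³} (h : Forces P Q n) : ‖n‖ = 1 :=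
  let ⟨_, hS, _, _, hn, _⟩ := h
  hS n hn

lemma Incompatible.of_forces {P Q n n' : ℝ³} (hn : Forces P Q n) (hn' : Forces P Q n')
    (h : Incompatible n n') : Incompatible P Q := by
  classical
  obtain ⟨S₁, hS₁, hP, hQ, hn, h₁⟩ := hn
  obtain ⟨S₂, hS₂, -, -, hn', h₂⟩ := hn'
  obtain ⟨S₃, hS₃, -, -, h₃⟩ := h
  refine ⟨S₁ ∪ S₂ ∪ S₃, ?_, by simp [hP], by simp [hQ], fun p hp hpP hpQ => ?_⟩
  · simp only [Finset.mem_union]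
    rintro x ((hx | hx) | hx)
    exacts [hS₁ x hx, hS₂ x hx, hS₃ x hx]
  · have hp₁ := hp.mono (Finset.subset_union_left.trans Finset.subset_union_left)
    have hp₂ := hp.mono (Finset.subset_union_right.trans Finset.subset_union_left)
    exact h₃ p (hp.mono Finset.subset_union_right) (h₁ p hp₁ hpP hpQ) (h₂ p hp₂ hpP hpQ)

lemma incompatible_of_inner_eq_zero {P Q : ℝ³} (hP : ‖P‖ = 1) (hQ : ‖Q‖ = 1)
    (h : ⟪P, Q⟫ = 0) : Incompatible P Q := by
  classical
  refine ⟨{P, Q, cross P Q}, ?_, by simp, by simp, fun p hp hpP => ?_⟩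
  · simp only [Finset.mem_insert, Finset.mem_singleton]
    rintro x (rfl | rfl | rfl)
    exacts [hP, hQ, norm_cross_eq_one hP hQ h]
  · rw [hp.eq_zero_of_eq_one (by simp) (by simp) (by simp) h hpP]
    exact zero_ne_one

lemma forces_normalize_sub {P Q x : ℝ³} (hP : ‖P‖ = 1) (hQ : ‖Q‖ = 1) (hx : ‖x‖ = 1)
    (hPx : ⟪P, x⟫ = 0) (hxQ : |⟪x, Q⟫| < 1) :
    Forces P Q (NormedSpace.normalize (Q - ⟪x, Q⟫ • x)) := by
  classical
  set y := NormedSpace.normalize (cross Q x)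
  set n := NormedSpace.normalize (Q - ⟪x, Q⟫ • x)
  have hy : ‖y‖ = 1 := by
    refine NormedSpace.norm_normalize_eq_one_iff.2 fun h => ?_
    have h' := norm_cross_sq Q x
    rw [h, norm_zero, hQ, hx, real_inner_comm] at h'
    nlinarith [abs_lt.mp hxQ]
  have hn : ‖n‖ = 1 := NormedSpace.norm_normalize_eq_one_iff.2 (sub_inner_smul_ne_zero hx hQ hxQ)
  have hQy : ⟪Q, y⟫ = 0 := by
    simp only [y, NormedSpace.normalize, real_inner_smul_right, inner_cross_left, mul_zero]
  have hxy : ⟪x, y⟫ = 0 := by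
    simp only [y, NormedSpace.normalize, real_inner_smul_right, inner_cross_right, mul_zero]
  have hxn : ⟪x, n⟫ = 0 := by
    simp only [n, NormedSpace.normalize, real_inner_smul_right, inner_sub_inner_smul_self hx,
      mul_zero]
  have hyn : ⟪y, n⟫ = 0 := by
    simp only [y, n, real_inner_normalize_normalize]
    rw [inner_sub_right, real_inner_smul_right, real_inner_comm Q, real_inner_comm x,
      inner_cross_left, inner_cross_right, mul_zero, sub_zero, zero_div]
  refine ⟨{P, Q, x, cross P x, y, cross Q y, n}, ?_, by simp, by simp, by simp,
    fun p hp hpP hpQ => ?_⟩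
  · simp only [Finset.mem_insert, Finset.mem_singleton]
    rintro z (rfl | rfl | rfl | rfl | rfl | rfl | rfl)
    exacts [hP, hQ, hx, norm_cross_eq_one hP hx hPx, hy, norm_cross_eq_one hQ hy hQy, hn]
  · have hpx := hp.eq_zero_of_eq_one (by simp) (by simp) (by simp) hPx hpP
    have hpy := hp.eq_zero_of_eq_one (by simp) (by simp) (by simp) hQy hpQ
    exact hp.eq_one_of_eq_zero (by simp) (by simp) (by simp) hxy hxn hyn hpx hpy

lemma exists_forces_pair {P Q : ℝ³} (hP : ‖P‖ = 1) (hQ : ‖Q‖ = 1) (hPQ : |⟪P, Q⟫| < 1)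
    {t : ℝ} (ht₀ : 0 ≤ t) (ht₁ : t < 1) :
    ∃ n n' : ℝ³, Forces P Q n ∧ Forces P Q n' ∧
      ⟪n, n'⟫ = (1 - 3 * (1 - ⟪P, Q⟫ ^ 2) * t + 2 * (1 - ⟪P, Q⟫ ^ 2) * t ^ 2) /
        (1 - (1 - ⟪P, Q⟫ ^ 2) * t) := by
  obtain ⟨x, x', hx, hx', hPx, hPx', hxQ, hx'Q, hxx'⟩ :=
    exists_pair_orthogonal_symmetric hP hQ hPQ ht₀ ht₁.le
  have hσ_sq : (√(1 - ⟪P, Q⟫ ^ 2) * √t) ^ 2 = (1 - ⟪P, Q⟫ ^ 2) * t := by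
    rw [mul_pow, Real.sq_sqrt (by nlinarith [abs_lt.mp hPQ]), Real.sq_sqrt ht₀]
  have hσ : |√(1 - ⟪P, Q⟫ ^ 2) * √t| < 1 := by
    rw [← sq_lt_one_iff_abs_lt_one, hσ_sq]
    nlinarith [sq_nonneg ⟪P, Q⟫]
  refine ⟨_, _, hxQ ▸ forces_normalize_sub hP hQ hx hPx (hxQ ▸ hσ),
    hx'Q ▸ forces_normalize_sub hP hQ hx' hPx' (hx'Q ▸ hσ), ?_⟩
  rw [inner_normalize_sub_smul_normalize_sub_smul hQ hx hx' hxQ hx'Q, hxx', hσ_sq]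
  ring

lemma incompatible_of_sq_inner_le {P Q : ℝ³} (hP : ‖P‖ = 1) (hQ : ‖Q‖ = 1)
    (hPQ : ⟪P, Q⟫ ^ 2 ≤ 1 / 9) : Incompatible P Q := by
  set q := 1 - ⟪P, Q⟫ ^ 2
  have hq : 8 / 9 ≤ q := by linarith
  have habs : |⟪P, Q⟫| < 1 := by
    rw [← sq_lt_one_iff_abs_lt_one]; linarith
  -- the numerator in `exists_forces_pair` is `1` at `t = 0` and `1 - 9q/8 ≤ 0` at `t = 3/4`
  obtain ⟨t, ⟨ht₀, ht₁⟩, ht⟩ : ∃ t ∈ Set.Icc (0 : ℝ) (3 / 4), 1 - 3 * q * t + 2 * q * t ^ 2 = 0 :=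
    intermediate_value_Icc' (by norm_num) (by fun_prop) ⟨by nlinarith, by norm_num⟩
  obtain ⟨n, n', hn, hn', hnn'⟩ := exists_forces_pair hP hQ habs ht₀ (by linarith)
  rw [ht, zero_div] at hnn'
  exact (incompatible_of_inner_eq_zero hn.norm_eq_one hn'.norm_eq_one hnn').of_forces hn hn'

lemma exists_forces_pair_inner_eq_two_mul_sq_div {P Q : ℝ³} (hP : ‖P‖ = 1) (hQ : ‖Q‖ = 1)
    (hPQ : |⟪P, Q⟫| < 1) :
    ∃ n n' : ℝ³, Forces P Q n ∧ Forces P Q n' ∧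
      ⟪n, n'⟫ = 2 * ⟪P, Q⟫ ^ 2 / (1 + ⟪P, Q⟫ ^ 2) := by
  obtain ⟨n, n', hn, hn', hnn'⟩ := exists_forces_pair hP hQ hPQ (t := 1 / 2) (by norm_num)
    (by norm_num)
  refine ⟨n, n', hn, hn', ?_⟩
  rw [hnn', div_eq_div_iff (by nlinarith [sq_nonneg ⟪P, Q⟫]) (by positivity)]
  ring

lemma incompatible_of_abs_inner_mul_pow_le {c₀ : ℝ} (hc₀ : c₀ < 1) (k : ℕ) {P Q : ℝ³}
    (hP : ‖P‖ = 1) (hQ : ‖Q‖ = 1) (hPQ : |⟪P, Q⟫| ≤ c₀)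
    (hk : |⟪P, Q⟫| * (2 * c₀ / (1 + c₀ ^ 2)) ^ k ≤ 1 / 3) : Incompatible P Q := by
  induction k generalizing P Q with
  | zero =>
    rw [pow_zero, mul_one] at hk
    exact incompatible_of_sq_inner_le hP hQ (by nlinarith [sq_abs ⟪P, Q⟫, abs_nonneg ⟪P, Q⟫])
  | succ k ih =>
    obtain ⟨n, n', hn, hn', hnn'⟩ :=
      exists_forces_pair_inner_eq_two_mul_sq_div hP hQ (hPQ.trans_lt hc₀)
    have hc₀' : 0 ≤ c₀ := (abs_nonneg _).trans hPQ
    have hcontract := two_mul_sq_div_one_add_sq_le (abs_nonneg ⟪P, Q⟫) hPQ hc₀.le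
    have hle_abs : 2 * ⟪P, Q⟫ ^ 2 / (1 + ⟪P, Q⟫ ^ 2) ≤ |⟪P, Q⟫| := by
      rw [div_le_iff₀ (by positivity), ← sq_abs]
      nlinarith [sq_nonneg (|⟪P, Q⟫| - 1), abs_nonneg ⟪P, Q⟫]
    rw [sq_abs] at hcontract
    have hnn'_nonneg : 0 ≤ ⟪n, n'⟫ := hnn' ▸ by positivity
    refine (ih hn.norm_eq_one hn'.norm_eq_one ?_ ?_).of_forces hn hn'
    · rw [abs_of_nonneg hnn'_nonneg, hnn']
      exact hle_abs.trans hPQ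
    · rw [abs_of_nonneg hnn'_nonneg, hnn']
      calc 2 * ⟪P, Q⟫ ^ 2 / (1 + ⟪P, Q⟫ ^ 2) * (2 * c₀ / (1 + c₀ ^ 2)) ^ k
          ≤ 2 * c₀ / (1 + c₀ ^ 2) * |⟪P, Q⟫| * (2 * c₀ / (1 + c₀ ^ 2)) ^ k := by gcongr
        _ = |⟪P, Q⟫| * (2 * c₀ / (1 + c₀ ^ 2)) ^ (k + 1) := by ring
        _ ≤ 1 / 3 := hk

lemma incompatible_of_abs_inner_lt_one {P Q : ℝ³} (hP : ‖P‖ = 1) (hQ : ‖Q‖ = 1)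
    (hPQ : |⟪P, Q⟫| < 1) : Incompatible P Q := by
  have hr : 2 * |⟪P, Q⟫| / (1 + |⟪P, Q⟫| ^ 2) < 1 := by
    rw [div_lt_one (by positivity)]
    nlinarith [pow_pos (sub_pos.2 hPQ) 2]
  obtain ⟨k, hk⟩ := exists_pow_lt_of_lt_one (by norm_num : (0 : ℝ) < 1 / 3) hr
  refine incompatible_of_abs_inner_mul_pow_le hPQ k hP hQ le_rfl ?_
  calc |⟪P, Q⟫| * (2 * |⟪P, Q⟫| / (1 + |⟪P, Q⟫| ^ 2)) ^ k
      ≤ (2 * |⟪P, Q⟫| / (1 + |⟪P, Q⟫| ^ 2)) ^ k :=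
        mul_le_of_le_one_left (by positivity) hPQ.le
    _ ≤ 1 / 3 := hk.le

end KochenSpecker

/-- For unit vectors `a, b` in `ℝ³` with `0 < |⟨a,b⟩| < 1` there is a finite set `Γ`
of unit vectors, closed under negation, containing `a` and `b`, such that every state
`p` on `Γ` with `p a = 1` satisfies `0 < p b < 1`. -/
theorem exists_finset_forcing_intermediate_value
    (a b : EuclideanSpace ℝ (Fin 3)) (ha : ‖a‖ = 1) (hb : ‖b‖ = 1)
    (hab₀ : 0 < |(inner ℝ a b : ℝ)|) (hab₁ : |(inner ℝ a b : ℝ)| < 1) :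
    ∃ Γ : Finset (EuclideanSpace ℝ (Fin 3)),
      (∀ x ∈ Γ, ‖x‖ = 1) ∧ (∀ x ∈ Γ, -x ∈ Γ) ∧ a ∈ Γ ∧ b ∈ Γ ∧
      ∀ p : EuclideanSpace ℝ (Fin 3) → ℝ, IsStateOn Γ p → p a = 1 →
        0 < p b ∧ p b < 1 := by
  classical
  obtain ⟨w, e, hw, he, hbw, hbe, hwe, hae, haw⟩ := exists_orthonormal_pair_perp ha hb hab₀ hab₁
  obtain ⟨S₁, hS₁, haS₁, hbS₁, h₁⟩ := incompatible_of_abs_inner_lt_one ha hb hab₁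
  obtain ⟨S₂, hS₂, -, -, h₂⟩ := incompatible_of_abs_inner_lt_one ha hw haw
  obtain ⟨Γ, hΓ, hneg, hT⟩ := exists_neg_closed_superset (S₁ ∪ S₂ ∪ {w, e, cross a e}) (by
    simp only [Finset.mem_union, Finset.mem_insert, Finset.mem_singleton]
    rintro x ((hx | hx) | rfl | rfl | rfl)
    exacts [hS₁ x hx, hS₂ x hx, hw, he, norm_cross_eq_one ha he hae])
  have hS₁Γ : S₁ ⊆ Γ := (Finset.subset_union_left.trans Finset.subset_union_left).trans hT
  have hS₂Γ : S₂ ⊆ Γ := (Finset.subset_union_right.trans Finset.subset_union_left).trans hT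
  have hmem : ∀ x ∈ ({w, e, cross a e} : Finset ℝ³), x ∈ Γ :=
    fun x hx => hT (Finset.mem_union_right _ hx)
  refine ⟨Γ, hΓ, hneg, hS₁Γ haS₁, hS₁Γ hbS₁, fun p hp hpa => ?_⟩
  have hpe := hp.eq_zero_of_eq_one (hS₁Γ haS₁) (hmem e (by simp)) (hmem _ (by simp)) hae hpa
  exact hp.pos_and_lt_one_of_ne_one (hS₁Γ hbS₁) (hmem w (by simp)) (hmem e (by simp)) hbw hbe
    hwe hpe (h₁ p (hp.mono hS₁Γ) hpa) (h₂ p (hp.mono hS₂Γ) hpa)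
end

section
/- Let z, q, q', q'', r, l, w be unit vectors in ℝ³ such that q' ⊥ z, q' ⊥ q, q'' ⊥ q, q'' ⊥ q', r ⊥ q'', l ⊥ r, l ⊥ q'', w ⊥ z, and w ⊥ q'. Suppose p assigns non-negative real values to these vectors and satisfies p(q) + p(q') + p(q'') = 1, p(r) + p(l) + p(q'') = 1, and p(z) + p(q') + p(w) = 1. If p(z) = 1 then p(q) ≥ p(r). -/
theorem graph_lemma_general (z q q' q'' r l w : EuclideanSpace ℝ (Fin 3))
    (p : EuclideanSpace ℝ (Fin 3) → ℝ)
    (hpq' : 0 ≤ p q') (hpl : 0 ≤ p l) (hpw : 0 ≤ p w)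
    (e1 : p q + p q' + p q'' = 1) (e2 : p r + p l + p q'' = 1)
    (e3 : p z + p q' + p w = 1) (hz1 : p z = 1) :
    p r ≤ p q := by
  -- `p z = 1` forces `p q' = 0` on the triple `(z, q', w)`; then the two triples through `q''`
  -- give `p q - p r = p l ≥ 0`.
  have hq'_zero : p q' = 0 := by linarith
  linarith

/-- The basic orthogonality-graph lemma for `G(z,q,r)`: with the orthogonality
relations between `z, q, q', q'', r, l, w` as in the graph, nonnegativity of `p` on
these vectors, and the state equations on the three orthogonal triples
`(q,q',q'')`, `(r,l,q'')`, `(z,q',w)`, the condition `p z = 1` entails `p q ≥ p r`. -/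
theorem graph_lemma (z q q' q'' r l w : EuclideanSpace ℝ (Fin 3))
    (hz : ‖z‖ = 1) (hq : ‖q‖ = 1) (hq' : ‖q'‖ = 1) (hq'' : ‖q''‖ = 1)
    (hr : ‖r‖ = 1) (hl : ‖l‖ = 1) (hw : ‖w‖ = 1)
    (h1 : (inner ℝ q' z : ℝ) = 0) (h2 : (inner ℝ q' q : ℝ) = 0)
    (h3 : (inner ℝ q'' q : ℝ) = 0) (h4 : (inner ℝ q'' q' : ℝ) = 0)
    (h5 : (inner ℝ r q'' : ℝ) = 0) (h6 : (inner ℝ l r : ℝ) = 0)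
    (h7 : (inner ℝ l q'' : ℝ) = 0) (h8 : (inner ℝ w z : ℝ) = 0)
    (h9 : (inner ℝ w q' : ℝ) = 0)
    (p : EuclideanSpace ℝ (Fin 3) → ℝ)
    (hpz : 0 ≤ p z) (hpq : 0 ≤ p q) (hpq' : 0 ≤ p q') (hpq'' : 0 ≤ p q'')
    (hpr : 0 ≤ p r) (hpl : 0 ≤ p l) (hpw : 0 ≤ p w)
    (e1 : p q + p q' + p q'' = 1) (e2 : p r + p l + p q'' = 1)
    (e3 : p z + p q' + p w = 1) (hz1 : p z = 1) :
    p r ≤ p q :=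
  graph_lemma_general z q q' q'' r l w p hpq' hpl hpw e1 e2 e3 hz1
end
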